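/- arXiv:2507.17902 — 9 statements merged into one kernel-verified Lean document; each statement's English description precedes it below -/
import Mathlib

section
/- Let G be a finite group, Z a subgroup of the center of G, φ : G → G/Z the quotient map, and 𝒞 a conjugacy class of G/Z not containing the identity. Let x ∈ G be an element with φ(x) ∈ 𝒞, and let 𝒞ₓ denote the conjugacy class of x in G. If the Killing graph 𝒢(G, 𝒞ₓ) is connected, then the Killing graph 𝒢(G/Z, 𝒞) is connected. Moreover, if the common order o of the elements of 𝒞 is coprime to the order of Z, then x can be chosen of order exactly o (i.e., there exists x ∈ G of order o with φ(x) ∈ 𝒞). -/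
/-- The Killing graph of a conjugation-stable subset `C` of a group `G`:
vertices are the elements of `C`, and distinct `a b : C` are adjacent iff the
centraliser of `a * b` meets `C`, i.e. iff the Killing form `K_C(a,b)` is nonzero. -/
def killingGraph {G : Type*} [Group G] (C : Set G) : SimpleGraph C :=
  SimpleGraph.fromRel fun a b => ∃ c ∈ C, Commute c ((a : G) * (b : G))

/-- The commuting graph on a subset `C` of a group: distinct elements are
adjacent iff they commute. -/
def commGraph {G : Type*} [Group G] (C : Set G) : SimpleGraph C :=
  SimpleGraph.fromRel fun a b => Commute (a : G) (b : G)

/-- The matrix of the Killing form on `C` over `ℚ`: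
`K_C(a,b) = |C_G(ab) ∩ C|`. -/
noncomputable def killingMatrix {G : Type*} [Group G] (C : Set G) [Fintype C] :
    Matrix C C ℚ :=
  Matrix.of fun a b => (Set.ncard {c ∈ C | Commute c ((a : G) * (b : G))} : ℚ)

/-- The set of involutions of a group. -/
def involSet (G : Type*) [Monoid G] : Set G := {x | x ^ 2 = 1 ∧ x ≠ 1}

/-!
Both parts pass to the quotient through `φ : G → G ⧸ Z`. Since `φ` maps the conjugacy class of
`x` onto `𝒞` and maps commuting elements to commuting elements, every edge of `𝒢(G, 𝒞ₓ)` becomes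
an edge or a loop of `𝒢(G/Z, 𝒞)`, so connectedness is inherited. For the lift of order `o`, write
`1 = o a + |Z| b` and take `x' = x ^ (|Z| b)`: it has the same image as `x`, and
`x' ^ o = ((x ^ o) ^ |Z|) ^ b = 1` because `x ^ o ∈ Z`.
-/

namespace SimpleGraph

theorem Connected.of_surjective {V W : Type*} {Γ : SimpleGraph V} {H : SimpleGraph W}
    (hΓ : Γ.Connected) (f : V → W) (hf : Function.Surjective f)
    (hadj : ∀ ⦃a b⦄, Γ.Adj a b → H.Reachable (f a) (f b)) : H.Connected := by
  have : Nonempty W := hΓ.nonempty.map f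
  refine ⟨fun u v => ?_⟩
  obtain ⟨a, rfl⟩ := hf u
  obtain ⟨b, rfl⟩ := hf v
  rw [reachable_eq_reflTransGen] at hadj ⊢
  exact Relation.ReflTransGen.lift' f hadj a b ((reachable_iff_reflTransGen _ _).1 (hΓ a b))

end SimpleGraph

section

variable {G H : Type*} [Group G] [Group H]

theorem killingGraph_reachable_imageFactorization (φ : G →* H) {C : Set G} {a b : C}
    (hab : (killingGraph C).Adj a b) :
    (killingGraph (φ '' C)).Reachable (C.imageFactorization φ a) (C.imageFactorization φ b) := by
  by_cases heq : C.imageFactorization φ a = C.imageFactorization φ b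
  · rw [heq]
  refine SimpleGraph.Adj.reachable ((SimpleGraph.fromRel_adj _ _ _).2 ⟨heq, ?_⟩)
  rcases ((SimpleGraph.fromRel_adj _ _ _).1 hab).2 with ⟨c, hc, hcomm⟩ | ⟨c, hc, hcomm⟩
  · exact Or.inl ⟨φ c, Set.mem_image_of_mem φ hc,
      by simpa [Set.imageFactorization] using hcomm.map φ⟩
  · exact Or.inr ⟨φ c, Set.mem_image_of_mem φ hc,
      by simpa [Set.imageFactorization] using hcomm.map φ⟩

theorem killingGraph_image_connected (φ : G →* H) {C : Set G}
    (hC : (killingGraph C).Connected) : (killingGraph (φ '' C)).Connected :=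
  hC.of_surjective _ Set.imageFactorization_surjective
    fun _ _ hab => killingGraph_reachable_imageFactorization φ hab

theorem MonoidHom.image_setOf_isConj (φ : G →* H) (hφ : Function.Surjective φ) (x : G) :
    φ '' {h | IsConj x h} = {h | IsConj (φ x) h} := by
  ext u
  constructor
  · rintro ⟨a, ha, rfl⟩
    exact φ.map_isConj ha
  · intro hu
    obtain ⟨c, rfl⟩ := isConj_iff.1 hu
    obtain ⟨g, rfl⟩ := hφ c
    exact ⟨g * x * g⁻¹, isConj_iff.2 ⟨g, rfl⟩, by simp⟩

theorem MonoidHom.exists_map_eq_orderOf_eq_of_coprime (φ : G →* H) (x : G)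
    (hcop : (orderOf (φ x)).Coprime (Nat.card φ.ker)) :
    ∃ y, φ y = φ x ∧ orderOf y = orderOf (φ x) := by
  set o := orderOf (φ x)
  set m := Nat.card φ.ker
  have hbezout : (1 : ℤ) = o * Nat.gcdA o m + m * Nat.gcdB o m := by
    rw [← Nat.gcd_eq_gcd_ab, hcop.gcd_eq_one, Nat.cast_one]
  set y := x ^ ((m : ℤ) * Nat.gcdB o m)
  have hy : φ y = φ x := by
    calc φ y = φ x ^ ((o : ℤ) * Nat.gcdA o m + m * Nat.gcdB o m) := by
          rw [map_zpow, zpow_add, zpow_mul (φ x) o, zpow_natCast, pow_orderOf_eq_one, one_zpow,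
            one_mul]
      _ = φ x := by rw [← hbezout, zpow_one]
  have hker : x ^ o ∈ φ.ker := by rw [φ.mem_ker, map_pow, pow_orderOf_eq_one]
  have hkill : (x ^ o) ^ m = 1 := congrArg Subtype.val (pow_card_eq_one' (x := ⟨x ^ o, hker⟩))
  refine ⟨y, hy, Nat.dvd_antisymm (orderOf_dvd_of_pow_eq_one ?_) ?_⟩
  · calc y ^ o = ((x ^ o) ^ m) ^ Nat.gcdB o m := by
          simp only [y, ← zpow_natCast, ← zpow_mul]
          ring_nf
      _ = 1 := by rw [hkill, one_zpow]
  · simpa only [hy] using orderOf_map_dvd φ y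

end

theorem statement0_general {G : Type*} [Group G] (Z : Subgroup G) [Z.Normal]
    (g₀ : G ⧸ Z) (𝒞 : Set (G ⧸ Z)) (h𝒞 : 𝒞 = {h | IsConj g₀ h})
    (x : G) (hx : (QuotientGroup.mk x : G ⧸ Z) ∈ 𝒞) :
    ((killingGraph {h : G | IsConj x h}).Connected → (killingGraph 𝒞).Connected) ∧
    (Nat.Coprime (orderOf g₀) (Nat.card Z) →
      ∃ x' : G, orderOf x' = orderOf g₀ ∧ (QuotientGroup.mk x' : G ⧸ Z) ∈ 𝒞) := by
  set φ := QuotientGroup.mk' Z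
  have hconj : IsConj g₀ (φ x) := by rwa [h𝒞] at hx
  have hclass : 𝒞 = φ '' {h | IsConj x h} := by
    rw [φ.image_setOf_isConj (QuotientGroup.mk'_surjective Z), h𝒞]
    exact Set.ext fun _ => ⟨hconj.symm.trans, hconj.trans⟩
  have horder : orderOf (φ x) = orderOf g₀ := by
    obtain ⟨c, hc⟩ := hconj
    exact (SemiconjBy.orderOf_eq _ hc).symm
  refine ⟨fun hconn => hclass ▸ killingGraph_image_connected φ hconn, fun hcop => ?_⟩
  obtain ⟨y, hy, hyorder⟩ := φ.exists_map_eq_orderOf_eq_of_coprime x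
    (by rwa [QuotientGroup.ker_mk', horder])
  refine ⟨y, hyorder.trans horder, ?_⟩
  change φ y ∈ 𝒞
  rwa [hy]

/-- If the Killing graph of the conjugacy class `𝒞ₓ` of a lift `x` of an element
of a conjugacy class `𝒞` of `G ⧸ Z` (with `Z` central and `1 ∉ 𝒞`) is connected,
then the Killing graph of `𝒞` is connected; moreover if the common order of the
elements of `𝒞` is coprime to `|Z|`, the lift can be chosen of that exact order. -/
theorem statement0 {G : Type*} [Group G] [Finite G] (Z : Subgroup G) [Z.Normal]
    (hZ : Z ≤ Subgroup.center G)
    (g₀ : G ⧸ Z) (𝒞 : Set (G ⧸ Z)) (h𝒞 : 𝒞 = {h | IsConj g₀ h})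
    (h1 : (1 : G ⧸ Z) ∉ 𝒞)
    (x : G) (hx : (QuotientGroup.mk x : G ⧸ Z) ∈ 𝒞) :
    ((killingGraph {h : G | IsConj x h}).Connected → (killingGraph 𝒞).Connected) ∧
    (Nat.Coprime (orderOf g₀) (Nat.card Z) →
      ∃ x' : G, orderOf x' = orderOf g₀ ∧ (QuotientGroup.mk x' : G ⧸ Z) ∈ 𝒞) :=
  statement0_general Z g₀ 𝒞 h𝒞 x hx
end

section
/- Let F be a finite field of characteristic 2, G = SL₂(F), and 𝒞 the set of involutions of G. Then the matrix K : 𝒞 × 𝒞 → ℚ defined by K(x,y) = |C_G(xy) ∩ 𝒞| is invertible (its determinant is nonzero); that is, the Killing form K_𝒞 is non-degenerate. -/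
/-! In characteristic `2` an involution `t` of `SL₂(F)` is `1 + N` with `N` a nonzero square-zero
matrix, and everything in `SL₂(F)` commuting with `t` has the form `1 + uN`. Hence centralisers of
involutions have exponent `2`, so an involution can commute with `xy` only if the involutions `x`
and `y` commute, and an involution commutes with at most `q - 1` involutions, `q = |F|`. In the
row of `x`, the Killing matrix therefore has diagonal entry `|𝒞| ≥ q² - 1` and at most `q - 2`
nonzero off-diagonal entries, each at most `q - 1`. As `(q - 2)(q - 1) < q² - 1`, the matrix is
strictly diagonally dominant, hence invertible. -/

open MatrixGroups

section Group

variable {G : Type*} [Group G]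

theorem commute_of_sq_eq_one {x y : G} (hx : x ^ 2 = 1) (hy : y ^ 2 = 1)
    (hxy : (x * y) ^ 2 = 1) : Commute x y := by
  rw [sq, mul_eq_one_iff_eq_inv] at hx hy hxy
  rw [Commute, SemiconjBy, hxy, mul_inv_rev, ← hx, ← hy]

theorem mul_mem_involSet {x y : G} (hx : x ∈ involSet G) (hy : y ∈ involSet G) (hne : x ≠ y)
    (hxy : Commute x y) : x * y ∈ involSet G := by
  refine ⟨by rw [hxy.mul_pow, hx.1, hy.1, one_mul], fun h => hne ?_⟩
  rw [mul_eq_one_iff_eq_inv] at h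
  rw [h, inv_eq_of_mul_eq_one_left (by rw [← sq, hy.1])]

theorem involSet_commute_mul_eq_empty
    (hexp : ∀ t ∈ involSet G, ∀ g : G, Commute g t → g ^ 2 = 1)
    {x y : G} (hx : x ∈ involSet G) (hy : y ∈ involSet G) (hxy : ¬Commute x y) :
    {c ∈ involSet G | Commute c (x * y)} = ∅ :=
  Set.eq_empty_of_forall_notMem fun c ⟨hc, hcxy⟩ =>
    hxy (commute_of_sq_eq_one hx.1 hy.1 (hexp c hc _ hcxy.symm))

variable [Fintype (involSet G)] [DecidableEq (involSet G)]

open Classical in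
theorem card_filter_commute_erase_le {m : ℕ}
    (hcent : ∀ t ∈ involSet G, {c ∈ involSet G | Commute c t}.ncard ≤ m) (x : involSet G) :
    ((Finset.univ.erase x).filter fun y : involSet G => Commute (x : G) y).card ≤ m - 1 := by
  set S := (Finset.univ.erase x).filter fun y : involSet G => Commute (x : G) y
  have hfin : {c ∈ involSet G | Commute c x}.Finite :=
    (Set.toFinite (involSet G)).subset fun c hc => hc.1
  have hsub : (S.map (Function.Embedding.subtype _) : Set G) ⊆
      {c ∈ involSet G | Commute c x} \ {(x : G)} := by
    simp only [S, Finset.coe_map, Function.Embedding.coe_subtype, Finset.coe_filter,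
      Finset.mem_erase, Finset.mem_univ, and_true]
    rintro _ ⟨y, ⟨hyx, hxy⟩, rfl⟩
    exact ⟨⟨y.2, hxy.symm⟩, fun h => hyx (Subtype.ext h)⟩
  calc S.card = ((S.map (Function.Embedding.subtype _) : Finset G) : Set G).ncard := by
        rw [Set.ncard_coe_finset, Finset.card_map]
    _ ≤ ({c ∈ involSet G | Commute c x} \ {(x : G)}).ncard := Set.ncard_le_ncard hsub hfin.sdiff
    _ = {c ∈ involSet G | Commute c x}.ncard - 1 :=
        Set.ncard_sdiff_singleton_of_mem (s := {c ∈ involSet G | Commute c x}) ⟨x.2, .refl _⟩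
    _ ≤ m - 1 := Nat.sub_le_sub_right (hcent x x.2) 1

theorem sum_ncard_commute_mul_le {m : ℕ}
    (hexp : ∀ t ∈ involSet G, ∀ g : G, Commute g t → g ^ 2 = 1)
    (hcent : ∀ t ∈ involSet G, {c ∈ involSet G | Commute c t}.ncard ≤ m) (x : involSet G) :
    ∑ y ∈ Finset.univ.erase x, {c ∈ involSet G | Commute c (x * y)}.ncard ≤ (m - 1) * m := by
  classical
  calc ∑ y ∈ Finset.univ.erase x, {c ∈ involSet G | Commute c (x * y)}.ncard
      ≤ ∑ y ∈ Finset.univ.erase x, if Commute (x : G) y then m else 0 := by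
        refine Finset.sum_le_sum fun y hy => ?_
        split_ifs with hxy
        · exact hcent _ (mul_mem_involSet x.2 y.2
            (fun h => (Finset.mem_erase.mp hy).1 (Subtype.ext h.symm)) hxy)
        · rw [involSet_commute_mul_eq_empty hexp x.2 y.2 hxy, Set.ncard_empty]
    _ = ((Finset.univ.erase x).filter fun y : involSet G => Commute (x : G) y).card * m := by
        rw [← Finset.sum_filter, Finset.sum_const, smul_eq_mul]
    _ ≤ (m - 1) * m := Nat.mul_le_mul_right m (card_filter_commute_erase_le hcent x)

theorem killingMatrix_involSet_det_ne_zero {m : ℕ}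
    (hexp : ∀ t ∈ involSet G, ∀ g : G, Commute g t → g ^ 2 = 1)
    (hcent : ∀ t ∈ involSet G, {c ∈ involSet G | Commute c t}.ncard ≤ m)
    (hlarge : (m - 1) * m < (involSet G).ncard) :
    (killingMatrix (involSet G)).det ≠ 0 := by
  refine det_ne_zero_of_sum_row_lt_diag fun x => ?_
  have hdiag : {c ∈ involSet G | Commute c (x * x)} = involSet G := by
    rw [← sq, x.2.1]
    simp
  simp only [killingMatrix, Matrix.of_apply, ← Rat.norm_cast_real, Rat.cast_natCast,
    Real.norm_natCast, hdiag]
  exact_mod_cast (sum_ncard_commute_mul_le hexp hcent x).trans_lt hlarge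

end Group

theorem CharTwo.sq_eq_one_iff_sub_one_mul_self_eq_zero {R : Type*} [Ring R] [CharP R 2] {x : R} :
    x ^ 2 = 1 ↔ (x - 1) * (x - 1) = 0 := by
  have h : (x - 1) * (x - 1) = x ^ 2 - 1 - (x + x) + (1 + 1) := by noncomm_ring
  rw [h, CharTwo.add_self_eq_zero, CharTwo.add_self_eq_zero, sub_zero, add_zero, sub_eq_zero]

namespace Matrix

theorem SpecialLinearGroup.coe_inj {n R : Type*} [DecidableEq n] [Fintype n] [CommRing R]
    {A B : SpecialLinearGroup n R} : (A : Matrix n n R) = B ↔ A = B :=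
  Subtype.ext_iff.symm

theorem SpecialLinearGroup.mem_involSet_iff {n R : Type*} [DecidableEq n] [Fintype n] [Nonempty n]
    [CommRing R] [CharP R 2] {t : SpecialLinearGroup n R} :
    t ∈ involSet (SpecialLinearGroup n R) ↔
      ((t : Matrix n n R) - 1) * ((t : Matrix n n R) - 1) = 0 ∧ (t : Matrix n n R) - 1 ≠ 0 := by
  simp only [involSet, Set.mem_ofPred_eq, ← SpecialLinearGroup.coe_inj,
    SpecialLinearGroup.coe_pow, SpecialLinearGroup.coe_one,
    CharTwo.sq_eq_one_iff_sub_one_mul_self_eq_zero, ne_eq, sub_eq_zero]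

variable {F : Type*} [Field F] [CharP F 2]

theorem fin_two_entries_of_mul_self_eq_zero {N : Matrix (Fin 2) (Fin 2) F} (hN : N * N = 0) :
    N 1 1 = N 0 0 ∧ N 0 0 * N 0 0 = N 0 1 * N 1 0 := by
  have e := fun i j => congrFun (congrFun hN i) j
  simp only [mul_apply, Fin.sum_univ_two, zero_apply] at e
  have hdiag : N 1 1 = N 0 0 := by
    rw [← CharTwo.sq_inj, sq, sq]
    linear_combination e 1 1 - e 0 0
  exact ⟨hdiag,
    by linear_combination -e 0 0 + N 0 0 * N 0 0 * (CharTwo.two_eq_zero : (2 : F) = 0)⟩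

/-- The entrywise content of `exists_eq_one_add_smul_of_commute`, for `N = !![a, b; d, a]` and
`g = !![p, q; r, s]`. -/
theorem exists_entries_eq_one_add_smul_of_commute {a b d p q r s : F} (hb : b ≠ 0)
    (hN : a * a = b * d) (hps : b * (p - s) = 0) (hqr : q * d = b * r) (hdet : p * s - q * r = 1) :
    ∃ u, p = 1 + u * a ∧ q = u * b ∧ r = u * d ∧ s = 1 + u * a := by
  obtain rfl : s = p := (sub_eq_zero.mp ((mul_eq_zero.mp hps).resolve_left hb)).symm
  have hp : s = 1 + q / b * a := by
    rw [← CharTwo.sq_inj]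
    field_simp
    linear_combination b ^ 2 * hdet - q * b * hqr - q ^ 2 * hN
      - b * q * a * (CharTwo.two_eq_zero : (2 : F) = 0)
  exact ⟨q / b, hp, by field_simp, by field_simp; linear_combination -hqr, hp⟩

theorem exists_eq_one_add_smul_of_commute {N g : Matrix (Fin 2) (Fin 2) F}
    (hN : N * N = 0) (hN0 : N ≠ 0) (hg : g.det = 1) (h : g * N = N * g) :
    ∃ u : F, g = 1 + u • N := by
  obtain ⟨hd, hsq⟩ := fin_two_entries_of_mul_self_eq_zero hN
  have e := fun i j => congrFun (congrFun h i) j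
  simp only [mul_apply, Fin.sum_univ_two] at e
  rw [det_fin_two] at hg
  obtain ⟨u, h00, h01, h10, h11⟩ : ∃ u, g 0 0 = 1 + u * N 0 0 ∧ g 0 1 = u * N 0 1 ∧
      g 1 0 = u * N 1 0 ∧ g 1 1 = 1 + u * N 0 0 := by
    by_cases hb : N 0 1 = 0
    · by_cases hc : N 1 0 = 0
      · refine absurd (ext fun i j => ?_) hN0
        have ha : N 0 0 = 0 := by simpa [hb, hc] using hsq
        fin_cases i <;> fin_cases j <;> simp [ha, hb, hc, hd]
      -- the case `N 0 1 ≠ 0` below, with the two indices swapped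
      · obtain ⟨u, h11, h10, h01, h00⟩ := exists_entries_eq_one_add_smul_of_commute
          (p := g 1 1) (q := g 1 0) (r := g 0 1) (s := g 0 0) hc (by rw [hsq, mul_comm])
          (by linear_combination e 1 0 + g 1 0 * hd) (by linear_combination -e 0 0)
          (by linear_combination hg)
        exact ⟨u, h00, h01, h10, h11⟩
    · exact exists_entries_eq_one_add_smul_of_commute (p := g 0 0) (q := g 0 1) (r := g 1 0)
        (s := g 1 1) hb hsq (by linear_combination e 0 1 - g 0 1 * hd)
        (by linear_combination e 0 0) hg
  refine ⟨u, ext fun i j => ?_⟩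
  fin_cases i <;> fin_cases j <;> simp [h00, h01, h10, h11, hd]

namespace SpecialLinearGroup

theorem exists_eq_one_add_smul_of_commute {t g : SL(2, F)} (ht : t ∈ involSet SL(2, F))
    (h : Commute g t) :
    ∃ u : F, (g : Matrix (Fin 2) (Fin 2) F) = 1 + u • ((t : Matrix (Fin 2) (Fin 2) F) - 1) := by
  obtain ⟨hN, hN0⟩ := mem_involSet_iff.mp ht
  refine Matrix.exists_eq_one_add_smul_of_commute hN hN0 g.2 ?_
  have hgt := congrArg Subtype.val h.eq
  simp only [coe_mul] at hgt
  rw [mul_sub, sub_mul, hgt, mul_one, one_mul]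

theorem sq_eq_one_of_commute {t g : SL(2, F)} (ht : t ∈ involSet SL(2, F)) (h : Commute g t) :
    g ^ 2 = 1 := by
  obtain ⟨u, hu⟩ := exists_eq_one_add_smul_of_commute ht h
  rw [← coe_inj, coe_pow, coe_one, CharTwo.sq_eq_one_iff_sub_one_mul_self_eq_zero, hu,
    add_sub_cancel_left, smul_mul_smul_comm, (mem_involSet_iff.mp ht).1, smul_zero]

theorem ncard_involSet_commute_le [Finite F] {t : SL(2, F)} (ht : t ∈ involSet SL(2, F)) :
    {c ∈ involSet SL(2, F) | Commute c t}.ncard ≤ Nat.card F - 1 := by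
  let N : Matrix (Fin 2) (Fin 2) F := t - 1
  calc {c ∈ involSet SL(2, F) | Commute c t}.ncard
      = ((↑) '' {c ∈ involSet SL(2, F) | Commute c t} : Set (Matrix (Fin 2) (Fin 2) F)).ncard :=
        (Set.ncard_image_of_injective _ Subtype.val_injective).symm
    _ ≤ ((fun u : F => 1 + u • N) '' {0}ᶜ).ncard := by
        refine Set.ncard_le_ncard ?_
        rintro _ ⟨c, ⟨hc, hct⟩, rfl⟩
        obtain ⟨u, hu⟩ := exists_eq_one_add_smul_of_commute ht hct
        refine ⟨u, fun (hu0 : u = 0) => (mem_involSet_iff.mp hc).2 ?_, hu.symm⟩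
        rw [hu, hu0, zero_smul, add_zero, sub_self]
    _ ≤ ({0}ᶜ : Set F).ncard := Set.ncard_image_le
    _ = Nat.card F - 1 := by rw [Set.ncard_compl, Set.ncard_singleton]

def involutionOf (p : F × F) : SL(2, F) :=
  ⟨!![1 + p.1 * p.2, p.1 ^ 2; p.2 ^ 2, 1 + p.1 * p.2], by
    rw [det_fin_two_of]
    linear_combination p.1 * p.2 * (CharTwo.two_eq_zero : (2 : F) = 0)⟩

theorem coe_involutionOf_sub_one (p : F × F) :
    (involutionOf p : Matrix (Fin 2) (Fin 2) F) - 1 =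
      !![p.1 * p.2, p.1 ^ 2; p.2 ^ 2, p.1 * p.2] := by
  ext i j
  fin_cases i <;> fin_cases j <;> simp [involutionOf]

theorem involutionOf_injective : Function.Injective (involutionOf (F := F)) := by
  rintro ⟨x, y⟩ ⟨x', y'⟩ h
  have h01 := (SpecialLinearGroup.ext_iff _ _).mp h 0 1
  have h10 := (SpecialLinearGroup.ext_iff _ _).mp h 1 0
  simp only [involutionOf, of_apply, cons_val', cons_val_zero, cons_val_one, empty_val',
    cons_val_fin_one] at h01 h10
  exact Prod.ext (CharTwo.sq_injective h01) (CharTwo.sq_injective h10)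

theorem involutionOf_mem_involSet {p : F × F} (hp : p ≠ 0) :
    involutionOf p ∈ involSet SL(2, F) := by
  refine mem_involSet_iff.mpr ⟨?_, fun h => hp ?_⟩
  · rw [coe_involutionOf_sub_one, mul_fin_two]
    ext i j
    fin_cases i <;> fin_cases j <;> simp <;> ring_nf <;> simp [CharTwo.two_eq_zero]
  · rw [coe_involutionOf_sub_one] at h
    have hx := congrFun (congrFun h 0) 1
    have hy := congrFun (congrFun h 1) 0
    simp only [of_apply, cons_val', cons_val_zero, cons_val_one, empty_val', cons_val_fin_one,
      zero_apply, pow_eq_zero_iff two_ne_zero] at hx hy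
    exact Prod.ext hx hy

theorem card_sq_sub_one_le_ncard_involSet [Finite F] :
    Nat.card F ^ 2 - 1 ≤ (involSet SL(2, F)).ncard :=
  calc Nat.card F ^ 2 - 1
      = ({0}ᶜ : Set (F × F)).ncard := by
        rw [Set.ncard_compl, Set.ncard_singleton, Nat.card_prod, sq]
    _ = (involutionOf '' {0}ᶜ).ncard :=
        (Set.ncard_image_of_injective _ involutionOf_injective).symm
    _ ≤ (involSet SL(2, F)).ncard :=
        Set.ncard_le_ncard (Set.image_subset_iff.mpr fun _ => involutionOf_mem_involSet)

end SpecialLinearGroup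

end Matrix

theorem statement2_general {F : Type*} [Field F] [Fintype F] [CharP F 2]
    [Fintype (involSet (Matrix.SpecialLinearGroup (Fin 2) F))]
    [DecidableEq (involSet (Matrix.SpecialLinearGroup (Fin 2) F))] :
    (killingMatrix (involSet (Matrix.SpecialLinearGroup (Fin 2) F))).det ≠ 0 := by
  have hq : 2 ≤ Nat.card F := Finite.one_lt_card
  have hdominant : (Nat.card F - 1 - 1) * (Nat.card F - 1) < Nat.card F ^ 2 - 1 := by
    zify [hq, (by omega : 1 ≤ Nat.card F - 1), (by nlinarith : 1 ≤ Nat.card F ^ 2),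
      (by omega : 1 ≤ Nat.card F)]
    nlinarith
  exact killingMatrix_involSet_det_ne_zero
    (fun t ht _ => Matrix.SpecialLinearGroup.sq_eq_one_of_commute ht)
    (fun t ht => Matrix.SpecialLinearGroup.ncard_involSet_commute_le ht)
    (hdominant.trans_le Matrix.SpecialLinearGroup.card_sq_sub_one_le_ncard_involSet)

/-- The Killing form on the set of involutions of `SL₂(F)`, `F` a finite field of
characteristic `2`, is non-degenerate: the matrix of the Killing form over `ℚ` has
nonzero determinant. -/
theorem statement2 {F : Type*} [Field F] [Fintype F] [DecidableEq F] [CharP F 2]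
    [Fintype (involSet (Matrix.SpecialLinearGroup (Fin 2) F))]
    [DecidableEq (involSet (Matrix.SpecialLinearGroup (Fin 2) F))] :
    (killingMatrix (involSet (Matrix.SpecialLinearGroup (Fin 2) F))).det ≠ 0 :=
  statement2_general
end

section
/- Let F be a finite field of odd characteristic p, G = SL₂(F), and let 𝒞 be a conjugacy class of elements of order p in G. Let y₁ ∈ 𝒞 and let S₁, S₂ be distinct Sylow p-subgroups of G with y₁ ∈ S₁. Then there exists a unique y₂ ∈ S₂ ∩ 𝒞 such that y₁y₂ = u·z for some u ∈ G with u^p = 1 and u ≠ 1 and some z in the center of G (i.e., y₁y₂ is the product of a non-trivial unipotent element and a central element). -/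
open Matrix
open scoped MatrixGroups

section CharP

variable (p : ℕ) [Fact p.Prime]

theorem Matrix.trace_eq_card_of_pow_char_pow_eq_one {F n : Type*} [Field F] [CharP F p]
    [Fintype n] [DecidableEq n] {M : Matrix n n F} {k : ℕ} (hM : M ^ p ^ k = 1) :
    M.trace = Fintype.card n := by
  cases isEmpty_or_nonempty n
  · simp [trace]
  have hnil : IsNilpotent (M - 1) :=
    ⟨p ^ k, by rw [sub_pow_char_pow_of_commute p k (Commute.one_right M), hM, one_pow, sub_self]⟩
  have := (isNilpotent_trace_of_isNilpotent hnil).eq_zero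
  rwa [trace_sub, trace_one, sub_eq_zero] at this

theorem pow_char_eq_one_of_sub_one_sq_eq_zero {R : Type*} [Ring R] [CharP R p] {x : R}
    (hx : (x - 1) ^ 2 = 0) : x ^ p = 1 := by
  have : (x - 1) ^ p = 0 := pow_eq_zero_of_le (Fact.out : p.Prime).two_le hx
  rwa [sub_pow_char_of_commute p (Commute.one_right x), one_pow, sub_eq_zero] at this

end CharP

theorem isPGroup_multiplicative (p : ℕ) {R : Type*} [Ring R] [CharP R p] :
    IsPGroup p (Multiplicative R) := fun b =>
  ⟨1, by rw [pow_one, ← ofAdd_toAdd b, ← ofAdd_nsmul]; simp⟩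

section Group

variable {G : Type*} [Group G] {p : ℕ}

theorem Sylow.coe_smul_eq_of_forall_conj_mem {P : Sylow p G} {H : Subgroup G}
    (hH : IsPGroup p H) {g : G} (h : ∀ y ∈ P, g * y * g⁻¹ ∈ H) :
    ((g • P : Sylow p G) : Subgroup G) = H := by
  refine ((g • P).is_maximal' hH fun x hx => ?_).symm
  rw [Sylow.coe_subgroup_smul, Subgroup.mem_smul_pointwise_iff_exists] at hx
  obtain ⟨y, hy, rfl⟩ := hx
  exact h y hy

theorem Sylow.conj_mem_smul_iff {P : Sylow p G} {g x : G} :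
    MulAut.conj g x ∈ g • P ↔ x ∈ P := by
  change _ ∈ ((g • P : Sylow p G) : Subgroup G) ↔ _
  rw [Sylow.coe_subgroup_smul]
  exact Subgroup.smul_mem_pointwise_smul_iff

def IsUnipotentTimesCentral (p : ℕ) (x : G) : Prop :=
  ∃ u z : G, u ^ p = 1 ∧ u ≠ 1 ∧ z ∈ Subgroup.center G ∧ x = u * z

theorem IsUnipotentTimesCentral.conj {x : G} (hx : IsUnipotentTimesCentral p x) (g : G) :
    IsUnipotentTimesCentral p (MulAut.conj g x) := by
  obtain ⟨u, z, hu, hu1, hz, rfl⟩ := hx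
  refine ⟨MulAut.conj g u, z, by rw [← map_pow, hu, map_one], ?_, hz, ?_⟩
  · rwa [Ne, map_eq_one_iff _ (MulAut.conj g).injective]
  · rw [map_mul, MulAut.conj_apply g z, Subgroup.mem_center_iff.1 hz g, mul_inv_cancel_right]

theorem isUnipotentTimesCentral_conj_iff {x : G} (g : G) :
    IsUnipotentTimesCentral p (MulAut.conj g x) ↔ IsUnipotentTimesCentral p x :=
  ⟨fun h => by simpa only [map_inv, MulAut.inv_apply_self] using h.conj g⁻¹, fun h => h.conj g⟩

end Group

namespace Matrix.SpecialLinearGroup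

section Transvection

variable {ι F : Type*} [DecidableEq ι] [Fintype ι] [CommRing F] {i j : ι}

def transvectionHom (hij : i ≠ j) : Multiplicative F →* SpecialLinearGroup ι F where
  toFun b := transvection hij b.toAdd
  map_one' := transvection_coeff_zero hij
  map_mul' b c := transvection_add hij b.toAdd c.toAdd

def transvectionSubgroup (hij : i ≠ j) : Subgroup (SpecialLinearGroup ι F) :=
  (transvectionHom hij).range

theorem mem_transvectionSubgroup_iff (hij : i ≠ j) {x : SpecialLinearGroup ι F} :
    x ∈ transvectionSubgroup hij ↔ ∃ b, transvection hij b = x :=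
  ⟨fun ⟨b, hb⟩ => ⟨b.toAdd, hb⟩, fun ⟨b, hb⟩ => ⟨.ofAdd b, hb⟩⟩

theorem isPGroup_transvectionSubgroup (p : ℕ) [CharP F p] (hij : i ≠ j) :
    IsPGroup p (transvectionSubgroup (F := F) hij) := by
  unfold transvectionSubgroup
  exact (isPGroup_multiplicative p).of_surjective _ (MonoidHom.rangeRestrict_surjective _)

end Transvection

section SL2

variable {F : Type*} [Field F]

abbrev upper (a : F) : SL(2, F) := transvection (zero_ne_one' (Fin 2)) a

abbrev lower (a : F) : SL(2, F) := transvection (one_ne_zero' (Fin 2)) a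

theorem coe_upper (a : F) : (upper a : Matrix (Fin 2) (Fin 2) F) = !![1, a; 0, 1] := by
  ext i j; fin_cases i <;> fin_cases j <;> simp [transvection_coe]

theorem coe_lower (a : F) : (lower a : Matrix (Fin 2) (Fin 2) F) = !![1, 0; a, 1] := by
  ext i j; fin_cases i <;> fin_cases j <;> simp [transvection_coe]

theorem coe_mul_upper_mul_inv (m : SL(2, F)) (c : F) :
    ((m * upper c * m⁻¹ : SL(2, F)) : Matrix (Fin 2) (Fin 2) F) =
      !![1 - c * m 0 0 * m 1 0, c * m 0 0 ^ 2; -(c * m 1 0 ^ 2), 1 + c * m 0 0 * m 1 0] := by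
  have hdet : m 0 0 * m 1 1 - m 0 1 * m 1 0 = 1 := by rw [← det_fin_two]; exact m.2
  rw [coe_mul, coe_mul, coe_inv, adjugate_fin_two, coe_upper]
  ext i j; fin_cases i <;> fin_cases j <;> simp [Matrix.mul_apply, Fin.sum_univ_two] <;>
    first | ring1 | linear_combination hdet

theorem mul_upper_mul_inv_of_apply_one_zero {m : SL(2, F)} (hm : m 1 0 = 0) (c : F) :
    m * upper c * m⁻¹ = upper (c * m 0 0 ^ 2) :=
  Subtype.ext <| by rw [coe_mul_upper_mul_inv, coe_upper, hm]; simp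

theorem mul_upper_mul_inv_of_apply_zero_zero {m : SL(2, F)} (hm : m 0 0 = 0) (c : F) :
    m * upper c * m⁻¹ = lower (-(c * m 1 0 ^ 2)) :=
  Subtype.ext <| by rw [coe_mul_upper_mul_inv, coe_lower, hm]; simp

theorem exists_upper_eq_of_trace_eq_two {x : SL(2, F)}
    (hx : (x : Matrix (Fin 2) (Fin 2) F).trace = 2)
    (hx1 : ((x * upper 1 : SL(2, F)) : Matrix (Fin 2) (Fin 2) F).trace = 2) :
    ∃ b, upper b = x := by
  have hdet : x 0 0 * x 1 1 - x 0 1 * x 1 0 = 1 := by rw [← det_fin_two]; exact x.2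
  rw [trace_fin_two] at hx
  rw [coe_mul, coe_upper, eta_fin_two (x : Matrix (Fin 2) (Fin 2) F), mul_fin_two,
    trace_fin_two_of] at hx1
  have h10 : x 1 0 = 0 := by linear_combination hx1 - hx
  have h00 : x 0 0 = 1 := by
    have : (x 0 0 - 1) ^ 2 = 0 := by linear_combination x 0 0 * hx - hdet - x 0 1 * h10
    simpa [sub_eq_zero] using this
  have h11 : x 1 1 = 1 := by linear_combination hx - h00
  refine ⟨x 0 1, Subtype.ext ?_⟩
  rw [coe_upper]
  ext i j; fin_cases i <;> fin_cases j <;> simp [h00, h10, h11]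

theorem trace_upper_mul_lower (a b : F) :
    ((upper a * lower b : SL(2, F)) : Matrix (Fin 2) (Fin 2) F).trace = 2 + a * b := by
  rw [coe_mul, coe_upper, coe_lower, mul_fin_two, trace_fin_two_of]
  ring

theorem isConj_upper_lower {a : F} (h2 : (2 : F) ≠ 0) (ha : a ≠ 0) :
    IsConj (upper a) (lower (-4 / a)) := by
  let m : SL(2, F) := ⟨!![0, a / 2; -(2 / a), 0], by rw [det_fin_two_of]; field_simp; ring⟩
  refine isConj_iff.2 ⟨m, ?_⟩
  rw [mul_upper_mul_inv_of_apply_zero_zero rfl]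
  change lower (-(a * (-(2 / a)) ^ 2)) = _
  congr 1
  field_simp
  ring

end SL2

section CharP

variable (p : ℕ) [Fact p.Prime] {F : Type*} [Field F] [CharP F p]

theorem trace_eq_card_of_pow_char_pow_eq_one {n : Type*} [Fintype n] [DecidableEq n]
    {x : SpecialLinearGroup n F} {k : ℕ} (hx : x ^ p ^ k = 1) :
    (x : Matrix n n F).trace = Fintype.card n :=
  Matrix.trace_eq_card_of_pow_char_pow_eq_one p (k := k) (by rw [← coe_pow, hx, coe_one])

theorem trace_eq_two_of_mem_of_isPGroup {Q : Subgroup SL(2, F)} (hQ : IsPGroup p Q)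
    {x : SL(2, F)} (hx : x ∈ Q) : (x : Matrix (Fin 2) (Fin 2) F).trace = 2 := by
  obtain ⟨k, hk⟩ := hQ ⟨x, hx⟩
  simpa using trace_eq_card_of_pow_char_pow_eq_one p (congrArg Subtype.val hk : x ^ p ^ k = 1)

variable (F) in
def upperSylow : Sylow p SL(2, F) where
  toSubgroup := transvectionSubgroup (zero_ne_one' (Fin 2))
  isPGroup' := isPGroup_transvectionSubgroup p _
  is_maximal' {Q} hQ hle := by
    refine le_antisymm (fun x hx => ?_) hle
    have hupper : upper 1 ∈ Q := hle ((mem_transvectionSubgroup_iff _).2 ⟨1, rfl⟩)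
    exact (mem_transvectionSubgroup_iff _).2 <| exists_upper_eq_of_trace_eq_two
      (trace_eq_two_of_mem_of_isPGroup p hQ hx)
      (trace_eq_two_of_mem_of_isPGroup p hQ (Q.mul_mem hx hupper))

theorem mem_upperSylow_iff {x : SL(2, F)} : x ∈ upperSylow p F ↔ ∃ b, upper b = x :=
  mem_transvectionSubgroup_iff _

theorem smul_upperSylow_of_apply_one_zero {m : SL(2, F)} (hm : m 1 0 = 0) :
    m • upperSylow p F = upperSylow p F := by
  refine Sylow.ext (Sylow.coe_smul_eq_of_forall_conj_mem (upperSylow p F).isPGroup' ?_)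
  intro y hy
  obtain ⟨b, rfl⟩ := (mem_upperSylow_iff p).1 hy
  rw [mul_upper_mul_inv_of_apply_one_zero hm]
  exact (mem_upperSylow_iff p).2 ⟨_, rfl⟩

theorem coe_smul_upperSylow_of_apply_zero_zero {m : SL(2, F)} (hm : m 0 0 = 0) :
    ((m • upperSylow p F : Sylow p SL(2, F)) : Subgroup SL(2, F)) =
      transvectionSubgroup (one_ne_zero' (Fin 2)) := by
  refine Sylow.coe_smul_eq_of_forall_conj_mem (isPGroup_transvectionSubgroup p _) ?_
  intro y hy
  obtain ⟨b, rfl⟩ := (mem_upperSylow_iff p).1 hy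
  rw [mul_upper_mul_inv_of_apply_zero_zero hm]
  exact (mem_transvectionSubgroup_iff _).2 ⟨_, rfl⟩

theorem exists_smul_eq_upperSylow_and_lower [Finite F] {S₁ S₂ : Sylow p SL(2, F)}
    (hS : S₁ ≠ S₂) :
    ∃ g : SL(2, F), g • S₁ = upperSylow p F ∧
      ((g • S₂ : Sylow p SL(2, F)) : Subgroup SL(2, F)) =
        transvectionSubgroup (one_ne_zero' (Fin 2)) := by
  classical
  have : Fintype F := Fintype.ofFinite F
  obtain ⟨g, hg⟩ := MulAction.exists_smul_eq SL(2, F) S₁ (upperSylow p F)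
  obtain ⟨e, he⟩ := MulAction.exists_smul_eq SL(2, F) (upperSylow p F) (g • S₂)
  have he10 : e 1 0 ≠ 0 := fun h =>
    hS <| MulAction.injective g <| hg.trans <|
      (smul_upperSylow_of_apply_one_zero p h).symm.trans he
  set d : SL(2, F) := upper (-(e 0 0 / e 1 0))
  have hd : d 1 0 = 0 := by simp [d, transvection_coe]
  have hde : (d * e) 0 0 = 0 := by
    rw [coe_mul, coe_upper, mul_apply, Fin.sum_univ_two]
    change 1 * e 0 0 + -(e 0 0 / e 1 0) * e 1 0 = 0
    rw [neg_mul, div_mul_cancel₀ _ he10]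
    ring
  refine ⟨d * g, by rw [mul_smul, hg, smul_upperSylow_of_apply_one_zero p hd], ?_⟩
  rw [mul_smul, ← he, ← mul_smul, coe_smul_upperSylow_of_apply_zero_zero p hde]

theorem isUnipotentTimesCentral_upper_mul_lower {a b : F} (ha : a ≠ 0) (hab : a * b = -4) :
    IsUnipotentTimesCentral p (upper a * lower b) := by
  refine ⟨-(upper a * lower b), -1, Subtype.ext ?_, fun h => ha ?_, ?_, by simp⟩
  · rw [coe_pow, coe_one]
    apply pow_char_eq_one_of_sub_one_sq_eq_zero p
    rw [coe_neg, coe_mul, coe_upper, coe_lower]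
    ext i j; fin_cases i <;> fin_cases j <;> simp [sq, Matrix.mul_apply, Fin.sum_univ_two] <;>
      first
        | linear_combination hab
        | linear_combination a * hab
        | linear_combination b * hab
        | linear_combination (a * b + 1) * hab
  · simpa [coe_upper, coe_lower] using congr($h 0 1)
  · exact Subgroup.mem_center_iff.2 fun g => by simp

theorem mul_eq_neg_four_of_isUnipotentTimesCentral {a b : F} (ha : a ≠ 0) (hb : b ≠ 0)
    (h : IsUnipotentTimesCentral p (upper a * lower b)) : a * b = -4 := by
  obtain ⟨u, z, hu, -, hz, huz⟩ := h
  obtain ⟨r, hr, hrz⟩ := mem_center_iff.1 hz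
  have htu : (u : Matrix (Fin 2) (Fin 2) F).trace = 2 := by
    have := trace_eq_card_of_pow_char_pow_eq_one p (k := 1) (by rwa [pow_one])
    simpa using this
  have htr : 2 + a * b = r * 2 := by
    rw [← trace_upper_mul_lower, huz, coe_mul, ← hrz, ← htu, scalar_apply,
      ← smul_one_eq_diagonal, Matrix.mul_smul, mul_one, trace_smul, smul_eq_mul, mul_comm]
  simp only [Fintype.card_fin, sq_eq_one_iff] at hr
  rcases hr with rfl | rfl
  · exact absurd (by linear_combination htr : a * b = 0) (mul_ne_zero ha hb)
  · linear_combination htr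

theorem existsUnique_mem_lower_isConj_isUnipotentTimesCentral (h2 : (2 : F) ≠ 0)
    {g₀ : SL(2, F)} (hg₀ : g₀ ≠ 1) {a : F} (ha : IsConj g₀ (upper a)) :
    ∃! y, y ∈ transvectionSubgroup (one_ne_zero' (Fin 2)) ∧ IsConj g₀ y ∧
      IsUnipotentTimesCentral p (upper a * y) := by
  have ha0 : a ≠ 0 := by
    rintro rfl
    exact hg₀ (isConj_one_left.1 (by simpa using ha))
  refine ⟨lower (-4 / a), ⟨(mem_transvectionSubgroup_iff _).2 ⟨_, rfl⟩,
    ha.trans (isConj_upper_lower h2 ha0),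
    isUnipotentTimesCentral_upper_mul_lower p ha0 (by field_simp)⟩, ?_⟩
  rintro y ⟨hy, hconj, hyu⟩
  obtain ⟨b, rfl⟩ := (mem_transvectionSubgroup_iff _).1 hy
  have hb : b ≠ 0 := by
    rintro rfl
    exact hg₀ (isConj_one_left.1 (by simpa using hconj))
  change lower b = lower (-4 / a)
  congr 1
  rw [eq_div_iff ha0, mul_comm, mul_eq_neg_four_of_isUnipotentTimesCentral p ha0 hb hyu]

end CharP

end Matrix.SpecialLinearGroup

open Matrix.SpecialLinearGroup in
/-- In `SL₂(F)` over a finite field of odd characteristic `p`, for a conjugacy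
class `𝒞` of elements of order `p`, an element `y₁ ∈ 𝒞 ∩ S₁`, and a Sylow
`p`-subgroup `S₂ ≠ S₁`, there is a unique `y₂ ∈ S₂ ∩ 𝒞` such that `y₁ * y₂` is
the product of a non-trivial unipotent element and a central element. -/
theorem statement3 {F : Type*} [Field F] [Fintype F] (p : ℕ) [Fact p.Prime]
    [CharP F p] (hodd : Odd p)
    (g₀ : Matrix.SpecialLinearGroup (Fin 2) F) (hg₀ : orderOf g₀ = p)
    (𝒞 : Set (Matrix.SpecialLinearGroup (Fin 2) F)) (h𝒞 : 𝒞 = {h | IsConj g₀ h})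
    (y₁ : Matrix.SpecialLinearGroup (Fin 2) F) (hy₁ : y₁ ∈ 𝒞)
    (S₁ S₂ : Sylow p (Matrix.SpecialLinearGroup (Fin 2) F))
    (hS : S₁ ≠ S₂) (hy₁S : y₁ ∈ S₁) :
    ∃! y₂ : Matrix.SpecialLinearGroup (Fin 2) F,
      y₂ ∈ S₂ ∧ y₂ ∈ 𝒞 ∧
      ∃ u z : Matrix.SpecialLinearGroup (Fin 2) F,
        u ^ p = 1 ∧ u ≠ 1 ∧ z ∈ Subgroup.center (Matrix.SpecialLinearGroup (Fin 2) F) ∧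
        y₁ * y₂ = u * z := by
  subst h𝒞
  have h2 : (2 : F) ≠ 0 :=
    Ring.two_ne_zero (by rw [ringChar.eq F p]; rintro rfl; norm_num at hodd)
  have hg₀1 : g₀ ≠ 1 := by
    rintro rfl
    exact (Fact.out : p.Prime).one_lt.ne (by rw [← hg₀, orderOf_one])
  have hconj (g y : SL(2, F)) : IsConj y (MulAut.conj g y) := isConj_iff.2 ⟨g, rfl⟩
  obtain ⟨g, hgS₁, hgS₂⟩ := exists_smul_eq_upperSylow_and_lower p hS
  obtain ⟨a, ha⟩ := (mem_upperSylow_iff p).1 (hgS₁ ▸ Sylow.conj_mem_smul_iff.2 hy₁S)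
  refine ((MulAut.conj g).toEquiv.existsUnique_congr fun y₂ => ?_).2
    (existsUnique_mem_lower_isConj_isUnipotentTimesCentral p h2 hg₀1
      (ha ▸ hy₁.trans (hconj g y₁)))
  rw [← hgS₂, ha, MulEquiv.toEquiv_eq_coe, MulEquiv.coe_toEquiv, ← map_mul]
  exact and_congr Sylow.conj_mem_smul_iff.symm <|
    and_congr ⟨fun h => h.trans (hconj g y₂), fun h => h.trans (hconj g y₂).symm⟩
      (isUnipotentTimesCentral_conj_iff g).symm
end

section
/- Let F be a finite field of odd characteristic p, G = SL₂(F), and let 𝒞 be a conjugacy class of elements of order p in G. Then the Killing graph 𝒢(G, 𝒞) is connected; equivalently, the Killing form K_𝒞 is irreducible. -/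
/-!
An element of order `p` of `SL₂(F)` in characteristic `p` has trace `2`, so it is conjugate to
`u = [[1, s], [0, 1]]`, and its class consists of the transvections `t_v = 1 + s • v (-y, x)` with
`v = (x, y) ≠ 0`. Transvections with parallel directions commute, hence are adjacent.
If `y ≠ 0`, rescale `v` to `w = c • v` with `s c y = 2`; then `tr (t_w u) = 2 - (s c y)² = -2`,
so `-(t_w u)` is unipotent, i.e. conjugate to a power of `u`, and the corresponding conjugate of
`u` lies in the class and commutes with `t_w u`. So every vertex is within distance `2` of `u`;
this needs `2 ≠ 0`.
-/

open Matrix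
open scoped MatrixGroups

section KillingGraph

variable {G : Type*} [Group G] {C : Set G}

lemma killingGraph_reachable_of_commute_mul {a b : C} {c : G} (hc : c ∈ C)
    (h : Commute c (a * b)) : (killingGraph C).Reachable a b := by
  by_cases hab : a = b
  · rw [hab]
  · exact (SimpleGraph.fromRel_adj _ _ _ |>.2 ⟨hab, .inl ⟨c, hc, h⟩⟩).reachable

lemma killingGraph_reachable_of_commute {a b : C} (h : Commute (a : G) b) :
    (killingGraph C).Reachable a b :=
  killingGraph_reachable_of_commute_mul a.2 ((Commute.refl _).mul_right h)

end KillingGraph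

namespace SL2

variable {F : Type*} [Field F]

/-- For `v = (x, y)` this is `1 + s • v (-y, x)`; every transvection of `F²` has this form. -/
def transvec (s x y : F) : SL(2, F) :=
  ⟨!![1 - s * x * y, s * x ^ 2; -(s * y ^ 2), 1 + s * x * y], by rw [det_fin_two_of]; ring⟩

@[simp] lemma coe_transvec (s x y : F) :
    (transvec s x y : Matrix (Fin 2) (Fin 2) F) =
      !![1 - s * x * y, s * x ^ 2; -(s * y ^ 2), 1 + s * x * y] :=
  rfl

@[simp] lemma transvec_zero (x y : F) : transvec 0 x y = 1 := by
  ext i j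
  fin_cases i <;> fin_cases j <;> simp

lemma transvec_mul_transvec (s t x y : F) :
    transvec s x y * transvec t x y = transvec (s + t) x y := by
  ext i j
  fin_cases i <;> fin_cases j <;> simp <;> ring

lemma transvec_mul_mul (s c x y : F) : transvec s (c * x) (c * y) = transvec (s * c ^ 2) x y := by
  ext i j
  fin_cases i <;> fin_cases j <;> simp <;> ring

lemma commute_transvec (s t x y : F) : Commute (transvec s x y) (transvec t x y) := by
  rw [Commute, SemiconjBy, transvec_mul_transvec, transvec_mul_transvec, add_comm]

lemma commute_transvec_mul_mul (s t c x y : F) :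
    Commute (transvec s x y) (transvec t (c * x) (c * y)) := by
  rw [transvec_mul_mul]
  exact commute_transvec _ _ _ _

lemma trace_transvec_mul_transvec (s t x y x' y' : F) :
    trace ((transvec s x y * transvec t x' y' : SL(2, F)) : Matrix (Fin 2) (Fin 2) F) =
      2 - s * t * (x * y' - x' * y) ^ 2 := by
  simp [trace_fin_two]
  ring

lemma conj_transvec_one_zero (k : SL(2, F)) (s : F) :
    k * transvec s 1 0 * k⁻¹ = transvec s (k 0 0) (k 1 0) := by
  have hdet : k 0 0 * k 1 1 - k 0 1 * k 1 0 = 1 := by rw [← det_fin_two]; exact k.2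
  rw [mul_inv_eq_iff_eq_mul]
  ext i j
  fin_cases i <;> fin_cases j <;> simp [mul_apply, Fin.sum_univ_two]
  · ring
  · linear_combination (-s * k 0 0) * hdet
  · ring
  · linear_combination (-s * k 1 0) * hdet

lemma exists_conj_transvec_one_zero_eq (s x : F) {y : F} (hy : y ≠ 0) :
    ∃ k : SL(2, F), k * transvec s 1 0 * k⁻¹ = transvec s x y :=
  ⟨⟨!![x, -y⁻¹; y, 0], by simp [det_fin_two_of, hy]⟩, conj_transvec_one_zero _ s⟩

lemma exists_conj_eq_of_trace_eq_two (g : SL(2, F))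
    (htr : trace (g : Matrix (Fin 2) (Fin 2) F) = 2) :
    ∃ (k : SL(2, F)) (t : F), k * transvec t 1 0 * k⁻¹ = g := by
  have hdet : g 0 0 * g 1 1 - g 0 1 * g 1 0 = 1 := by rw [← det_fin_two]; exact g.2
  rw [trace_fin_two] at htr
  by_cases hc : g 1 0 = 0
  · have ha : g 0 0 = 1 := by
      have : (g 0 0 - 1) ^ 2 = 0 := by
        linear_combination (-1 : F) * hdet + g 0 0 * htr - g 0 1 * hc
      simpa [sub_eq_zero] using this
    refine ⟨1, g 0 1, ?_⟩
    ext i j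
    fin_cases i <;> fin_cases j <;> simp [ha, hc]
    linear_combination ha - htr
  · obtain ⟨k, hk⟩ := exists_conj_transvec_one_zero_eq (-(g 1 0)⁻¹) (g 0 0 - 1) hc
    refine ⟨k, _, hk.trans ?_⟩
    ext i j
    fin_cases i <;> fin_cases j <;> simp <;> field_simp
    · ring
    · linear_combination hdet - g 0 0 * htr
    · linear_combination -htr

lemma trace_eq_two_of_pow_eq_one (p : ℕ) [Fact p.Prime] [CharP F p] {g : SL(2, F)}
    (hg : g ^ p = 1) : trace (g : Matrix (Fin 2) (Fin 2) F) = 2 := by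
  set A := (g : Matrix (Fin 2) (Fin 2) F)
  have hdet : A 0 0 * A 1 1 - A 0 1 * A 1 0 = 1 := by rw [← det_fin_two]; exact g.2
  have hdet_sub : det (A - 1) = 2 - trace A := by
    simp [det_fin_two, trace_fin_two]
    linear_combination hdet
  have hpow : (A - 1) ^ p = 0 := by
    have : A ^ p = 1 := by
      simpa using congrArg (fun h : SL(2, F) => (h : Matrix (Fin 2) (Fin 2) F)) hg
    rw [sub_pow_char_of_commute p (Commute.one_right _), one_pow, this, sub_self]
  have : det (A - 1) = 0 := by
    rw [← pow_eq_zero_iff (Fact.out : p.Prime).ne_zero, ← det_pow, hpow, det_zero]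
  linear_combination -this + hdet_sub

lemma exists_conj_commute_of_trace_eq_neg_two (s : F) {m : SL(2, F)}
    (htr : trace (m : Matrix (Fin 2) (Fin 2) F) = -2) :
    ∃ k : SL(2, F), Commute (k * transvec s 1 0 * k⁻¹) m := by
  obtain ⟨k, t, hk⟩ := exists_conj_eq_of_trace_eq_two (-m) (by
    rw [SpecialLinearGroup.coe_neg, trace_neg, htr, neg_neg])
  refine ⟨k, ?_⟩
  have := (commute_transvec s t 1 0).conj k
  rw [hk] at this
  simpa using this.neg_right

variable {s : F}

lemma killingGraph_reachable_of_trace_mul_eq_neg_two {a b : conjugatesOf (transvec s 1 0)}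
    (htr : trace ((a * b : SL(2, F)) : Matrix (Fin 2) (Fin 2) F) = -2) :
    (killingGraph (conjugatesOf (transvec s 1 0))).Reachable a b := by
  obtain ⟨k, hk⟩ := exists_conj_commute_of_trace_eq_neg_two s htr
  exact killingGraph_reachable_of_commute_mul (isConj_iff.2 ⟨k, rfl⟩) hk

lemma killingGraph_reachable_transvec (h2 : (2 : F) ≠ 0) {x y : F}
    (ha : IsConj (transvec s 1 0) (transvec s x y)) :
    (killingGraph (conjugatesOf (transvec s 1 0))).Reachable
      ⟨transvec s 1 0, mem_conjugatesOf_self⟩ ⟨transvec s x y, ha⟩ := by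
  rcases eq_or_ne s 0 with rfl | hs
  · exact killingGraph_reachable_of_commute (by simp)
  by_cases hy : y = 0
  · refine killingGraph_reachable_of_commute ?_
    simpa [hy] using commute_transvec_mul_mul s s x 1 0
  -- `c` makes `s * (c * y) = 2`, so that `tr (b * u) = 2 - 2 ^ 2 = -2` below.
  set c := 2 / (s * y)
  have hcy : c * y ≠ 0 := by simp [c, hs, hy, h2]
  obtain ⟨k, hk⟩ := exists_conj_transvec_one_zero_eq s (c * x) hcy
  let b : conjugatesOf (transvec s 1 0) :=
    ⟨transvec s (c * x) (c * y), hk ▸ isConj_iff.2 ⟨k, rfl⟩⟩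
  have hub : (killingGraph (conjugatesOf (transvec s 1 0))).Reachable
      ⟨transvec s 1 0, mem_conjugatesOf_self⟩ b := by
    refine (killingGraph_reachable_of_trace_mul_eq_neg_two ?_).symm
    change trace ((transvec s (c * x) (c * y) * transvec s 1 0 : SL(2, F)) :
      Matrix (Fin 2) (Fin 2) F) = -2
    rw [trace_transvec_mul_transvec]
    simp only [c]
    field_simp
    ring
  have hba : (killingGraph (conjugatesOf (transvec s 1 0))).Reachable b ⟨_, ha⟩ :=
    killingGraph_reachable_of_commute (commute_transvec_mul_mul s s c x y).symm
  exact hub.trans hba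

theorem killingGraph_conj_transvec_connected (h2 : (2 : F) ≠ 0) :
    (killingGraph (conjugatesOf (transvec s 1 0))).Connected := by
  refine (SimpleGraph.connected_iff_exists_forall_reachable _).2
    ⟨⟨_, mem_conjugatesOf_self⟩, ?_⟩
  rintro ⟨a, ha⟩
  obtain ⟨k, rfl⟩ := isConj_iff.1 ha
  have hk := conj_transvec_one_zero k s
  convert killingGraph_reachable_transvec h2 (hk ▸ ha)

end SL2

theorem statement4_general {F : Type*} [Field F] (p : ℕ) [Fact p.Prime]
    [CharP F p] (hodd : Odd p)
    (g₀ : Matrix.SpecialLinearGroup (Fin 2) F) (hg₀ : orderOf g₀ = p) :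
    (killingGraph {h : Matrix.SpecialLinearGroup (Fin 2) F | IsConj g₀ h}).Connected := by
  have h2 : (2 : F) ≠ 0 := Ring.two_ne_zero (ringChar.eq F p ▸ hodd.ne_two_of_dvd_nat dvd_rfl)
  obtain ⟨k, s, hk⟩ := SL2.exists_conj_eq_of_trace_eq_two g₀
    (SL2.trace_eq_two_of_pow_eq_one p (hg₀ ▸ pow_orderOf_eq_one g₀))
  change (killingGraph (conjugatesOf g₀)).Connected
  rw [← (isConj_iff.2 ⟨k, hk⟩ : IsConj (SL2.transvec s 1 0) g₀).conjugatesOf_eq]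
  exact SL2.killingGraph_conj_transvec_connected h2

/-- In `SL₂(F)` over a finite field of odd characteristic `p`, the Killing graph
of a conjugacy class of elements of order `p` is connected, i.e. the Killing form
is irreducible. -/
theorem statement4 {F : Type*} [Field F] [Fintype F] (p : ℕ) [Fact p.Prime]
    [CharP F p] (hodd : Odd p)
    (g₀ : Matrix.SpecialLinearGroup (Fin 2) F) (hg₀ : orderOf g₀ = p) :
    (killingGraph {h : Matrix.SpecialLinearGroup (Fin 2) F | IsConj g₀ h}).Connected :=
  statement4_general p hodd g₀ hg₀
end

section
/- Let F be a finite field of odd characteristic p, G = GL₂(F), and let 𝒞 be a conjugacy class of elements of order p in G. Then the Killing graph 𝒢(G, 𝒞) is connected; equivalently, the Killing form K_𝒞 is irreducible. -/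
/-!
Elements of order `p` in `GL₂(F)` are exactly the nontrivial unipotents `1 + N` with `N ≠ 0`,
`N² = 0`, and any two of them are conjugate. For two such elements `a = 1 + A`, `b = 1 + B`, the
product `ab` has determinant `1` and trace `2 + tr(AB)`. If `tr(AB) = 0`, resp. `-4`, then `ab`,
resp. `-ab`, is unipotent by Cayley–Hamilton, so it is either central or in the class, and either
way `ab` commutes with an element of the class: `a` and `b` are adjacent. Since `tr(AB)` is linear
in `A`, the vertex `m = 1 + λA` with `λ = -4 / tr(AB)` satisfies `tr(A · λA) = 0` and
`tr(λA · B) = -4`, giving a path `a — m — b`; `λ ≠ 0` is where `p` odd enters.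
-/

open Matrix

theorem killingGraph_adj_of_mul_mem_center {G : Type*} [Group G] {C : Set G} {a b : C}
    (hab : a ≠ b) (h : (a : G) * b ∈ Subgroup.center G) : (killingGraph C).Adj a b := by
  rw [killingGraph, SimpleGraph.fromRel_adj]
  exact ⟨hab, .inl ⟨a, a.2, Subgroup.mem_center_iff.mp h a⟩⟩

theorem killingGraph_adj_of_central_mul_mem {G : Type*} [Group G] {C : Set G} {a b : C}
    (hab : a ≠ b) {z : G} (hz : z ∈ Subgroup.center G) (h : z * (a * b) ∈ C) :
    (killingGraph C).Adj a b := by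
  have hz' : Commute z (a * b) := (Subgroup.mem_center_iff.mp hz _).symm
  rw [killingGraph, SimpleGraph.fromRel_adj]
  exact ⟨hab, .inl ⟨_, h, hz'.mul_left (.refl _)⟩⟩

namespace Matrix

section Reduced

variable {R : Type*} [CommRing R] [IsReduced R]

theorem det_eq_zero_of_isNilpotent {n : Type*} [Fintype n] [DecidableEq n] [Nonempty n]
    {M : Matrix n n R} (hM : IsNilpotent M) : M.det = 0 := by
  obtain ⟨k, hk⟩ := hM
  exact IsNilpotent.eq_zero ⟨k, by rw [← det_pow, hk, det_zero]⟩

theorem trace_eq_zero_of_isNilpotent {n : Type*} [Fintype n] [DecidableEq n]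
    {M : Matrix n n R} (hM : IsNilpotent M) : M.trace = 0 :=
  (isNilpotent_trace_of_isNilpotent hM).eq_zero

end Reduced

section FinTwo

variable {R : Type*} [CommRing R]

theorem sq_fin_two (M : Matrix (Fin 2) (Fin 2) R) : M ^ 2 = M.trace • M - M.det • 1 := by
  ext i j
  fin_cases i <;> fin_cases j <;> simp [sq, mul_apply, trace_fin_two, det_fin_two] <;> ring

theorem sq_sub_one_eq_zero_fin_two {M : Matrix (Fin 2) (Fin 2) R} (hdet : M.det = 1)
    (htr : M.trace = 2) : (M - 1) ^ 2 = 0 := by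
  rw [show (M - 1) ^ 2 = M ^ 2 - (2 : R) • M + 1 by rw [two_smul]; noncomm_ring, sq_fin_two, hdet,
    htr, one_smul]
  abel

theorem sq_eq_zero_of_isNilpotent_fin_two [IsReduced R] {M : Matrix (Fin 2) (Fin 2) R}
    (hM : IsNilpotent M) : M ^ 2 = 0 := by
  rw [sq_fin_two, trace_eq_zero_of_isNilpotent hM, det_eq_zero_of_isNilpotent hM, zero_smul,
    zero_smul, sub_zero]

theorem det_one_add_fin_two [IsReduced R] {N : Matrix (Fin 2) (Fin 2) R} (hN : N ^ 2 = 0) :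
    (1 + N).det = 1 := by
  have hdet := det_eq_zero_of_isNilpotent ⟨2, hN⟩
  have htr := trace_eq_zero_of_isNilpotent ⟨2, hN⟩
  rw [det_fin_two] at hdet ⊢
  rw [trace_fin_two] at htr
  simp only [add_apply, one_apply_eq, one_apply_ne zero_ne_one, one_apply_ne one_ne_zero, zero_add]
  linear_combination htr + hdet

end FinTwo

theorem exists_eq_conj_fin_two {F : Type*} [Field F] {N : Matrix (Fin 2) (Fin 2) F} (hN : N ≠ 0)
    (h2 : N ^ 2 = 0) :
    ∃ P : GL (Fin 2) F, N = (P : Matrix (Fin 2) (Fin 2) F) * !![0, 1; 0, 0] *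
      (↑P⁻¹ : Matrix (Fin 2) (Fin 2) F) := by
  obtain ⟨v, hv⟩ : ∃ v, N *ᵥ v ≠ 0 := by
    by_contra! h
    exact hN (toLin'.injective (LinearMap.ext fun v => by simpa using h v))
  have hNNv : N *ᵥ (N *ᵥ v) = 0 := by rw [mulVec_mulVec, ← sq, h2, zero_mulVec]
  -- in the basis `N v, v` the matrix of `N` is `!![0, 1; 0, 0]`
  set P := (of ![N *ᵥ v, v])ᵀ
  have hP : IsUnit P := by
    rw [← linearIndependent_cols_iff_isUnit]
    refine LinearIndependent.pair_iff.mpr fun s t hst => ?_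
    have ht : t • N *ᵥ v = 0 := by
      simpa only [mulVec_add, mulVec_smul, hNNv, smul_zero, zero_add, mulVec_zero] using
        congrArg (N *ᵥ ·) hst
    obtain rfl := (smul_eq_zero.mp ht).resolve_right hv
    rw [zero_smul, add_zero] at hst
    exact ⟨(smul_eq_zero.mp hst).resolve_right hv, rfl⟩
  refine ⟨hP.unit, (Units.eq_mul_inv_iff_mul_eq _).mpr ?_⟩
  ext i j
  fin_cases j
  · simpa [P, mul_apply, Fin.sum_univ_two, mulVec, dotProduct] using congrFun hNNv i
  · fin_cases i <;> simp [P, mul_apply, Fin.sum_univ_two]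

end Matrix

namespace Units

variable {R : Type*} [Ring R]

theorem val_sub_one_ne_zero {g : Rˣ} (hg : g ≠ 1) : (g : R) - 1 ≠ 0 :=
  sub_ne_zero.mpr (val_eq_one.not.mpr hg)

theorem isConj_of_sub_one_eq_conj {g h c : Rˣ} (hc : (h : R) - 1 = c * ((g : R) - 1) * ↑c⁻¹) :
    IsConj g h := by
  refine isConj_iff.mpr ⟨c, ext ?_⟩
  rw [← sub_left_inj (a := (1 : R)), val_mul, val_mul, hc, mul_sub, sub_mul, mul_one, mul_inv]

end Units

section GL₂

variable {F : Type*} [Field F]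

local notation "M₂" => Matrix (Fin 2) (Fin 2) F

def nontrivialUnipotents (F : Type*) [Field F] : Set (GL (Fin 2) F) :=
  {g | ((g : Matrix (Fin 2) (Fin 2) F) - 1) ^ 2 = 0 ∧ g ≠ 1}

theorem exists_mem_nontrivialUnipotents_sub_one_eq {N : M₂} (hN : N ≠ 0) (h2 : N ^ 2 = 0) :
    ∃ g ∈ nontrivialUnipotents F, (g : M₂) - 1 = N := by
  set g := (IsNilpotent.isUnit_one_add ⟨2, h2⟩).unit
  have hg : (g : M₂) - 1 = N := by simp [g]
  refine ⟨g, ⟨by rw [hg, h2], fun h1 => hN ?_⟩, hg⟩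
  rw [← hg, h1, Units.val_one, sub_self]

theorem exists_mem_nontrivialUnipotents_sub_one_eq_single :
    ∃ s ∈ nontrivialUnipotents F, (s : M₂) - 1 = !![0, 1; 0, 0] :=
  exists_mem_nontrivialUnipotents_sub_one_eq (fun h => one_ne_zero (congrFun (congrFun h 0) 1))
    (by ext i j; fin_cases i <;> fin_cases j <;> simp [sq])

theorem isConj_of_mem_nontrivialUnipotents {g h : GL (Fin 2) F}
    (hg : g ∈ nontrivialUnipotents F) (hh : h ∈ nontrivialUnipotents F) : IsConj g h := by
  obtain ⟨s, -, hs⟩ := exists_mem_nontrivialUnipotents_sub_one_eq_single (F := F)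
  have conj_s {k : GL (Fin 2) F} (hk : k ∈ nontrivialUnipotents F) : IsConj s k := by
    obtain ⟨P, hP⟩ := exists_eq_conj_fin_two (Units.val_sub_one_ne_zero hk.2) hk.1
    exact Units.isConj_of_sub_one_eq_conj (c := P) (by rw [hP, hs])
  exact (conj_s hg).symm.trans (conj_s hh)

theorem mem_nontrivialUnipotents_of_orderOf_eq (p : ℕ) [Fact p.Prime] [CharP F p]
    {g : GL (Fin 2) F} (hg : orderOf g = p) : g ∈ nontrivialUnipotents F := by
  have hgp : (g : M₂) ^ p = 1 := by
    rw [← Units.val_pow_eq_pow_val, ← hg, pow_orderOf_eq_one, Units.val_one]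
  refine ⟨sq_eq_zero_of_isNilpotent_fin_two ⟨p, ?_⟩, ?_⟩
  · rw [sub_pow_char_of_commute p (Commute.one_right _), hgp, one_pow, sub_self]
  · rintro rfl
    exact (Fact.out : p.Prime).one_lt.ne (orderOf_one.symm.trans hg)

theorem setOf_isConj_eq_nontrivialUnipotents (p : ℕ) [Fact p.Prime] [CharP F p]
    {g₀ : GL (Fin 2) F} (hg₀ : orderOf g₀ = p) : {h | IsConj g₀ h} = nontrivialUnipotents F := by
  ext h
  refine ⟨fun ⟨c, hc⟩ => mem_nontrivialUnipotents_of_orderOf_eq p ?_,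
    isConj_of_mem_nontrivialUnipotents (mem_nontrivialUnipotents_of_orderOf_eq p hg₀)⟩
  rw [← SemiconjBy.orderOf_eq _ hc, hg₀]

theorem det_eq_one_of_mem_nontrivialUnipotents {a : GL (Fin 2) F}
    (ha : a ∈ nontrivialUnipotents F) : (a : M₂).det = 1 := by
  simpa using det_one_add_fin_two ha.1

theorem trace_mul_of_mem_nontrivialUnipotents {a b : GL (Fin 2) F}
    (ha : a ∈ nontrivialUnipotents F) (hb : b ∈ nontrivialUnipotents F) :
    ((a : M₂) * b).trace = 2 + (((a : M₂) - 1) * ((b : M₂) - 1)).trace := by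
  have hA := trace_eq_zero_of_isNilpotent ⟨2, ha.1⟩
  have hB := trace_eq_zero_of_isNilpotent ⟨2, hb.1⟩
  rw [show ((a : M₂) - 1) * ((b : M₂) - 1) = a * b - ((a : M₂) - 1) - ((b : M₂) - 1) - 1 by
    noncomm_ring]
  simp only [trace_sub, hA, hB, trace_one, Fintype.card_fin]
  ring

theorem mem_nontrivialUnipotents_or_eq_one {W : GL (Fin 2) F} (hdet : (W : M₂).det = 1)
    (htr : (W : M₂).trace = 2) : W ∈ nontrivialUnipotents F ∨ W = 1 :=
  or_iff_not_imp_right.mpr fun hW => ⟨sq_sub_one_eq_zero_fin_two hdet htr, hW⟩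

theorem killingGraph_nontrivialUnipotents_adj {a b : nontrivialUnipotents F} (hab : a ≠ b)
    {z : GL (Fin 2) F} (hz : z ∈ Subgroup.center _)
    (hdet : ((z * (a * b) : GL (Fin 2) F) : M₂).det = 1)
    (htr : ((z * (a * b) : GL (Fin 2) F) : M₂).trace = 2) :
    (killingGraph (nontrivialUnipotents F)).Adj a b := by
  rcases mem_nontrivialUnipotents_or_eq_one hdet htr with h | h
  · exact killingGraph_adj_of_central_mul_mem hab hz h
  · refine killingGraph_adj_of_mul_mem_center hab ?_
    rw [eq_inv_of_mul_eq_one_right h]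
    exact Subgroup.inv_mem _ hz

theorem killingGraph_nontrivialUnipotents_reachable {a b : nontrivialUnipotents F}
    (h : (((a.1 : M₂) - 1) * ((b.1 : M₂) - 1)).trace = 0 ∨
      (((a.1 : M₂) - 1) * ((b.1 : M₂) - 1)).trace = -4) :
    (killingGraph (nontrivialUnipotents F)).Reachable a b := by
  rcases eq_or_ne a b with rfl | hab
  · rfl
  have hdet : ((a.1 : M₂) * b.1).det = 1 := by
    rw [det_mul, det_eq_one_of_mem_nontrivialUnipotents a.2,
      det_eq_one_of_mem_nontrivialUnipotents b.2, one_mul]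
  have htr := trace_mul_of_mem_nontrivialUnipotents a.2 b.2
  rcases h with h | h
  · refine (killingGraph_nontrivialUnipotents_adj hab (Subgroup.one_mem _) ?_ ?_).reachable
    · simpa using hdet
    · simp [htr, h]
  · refine (killingGraph_nontrivialUnipotents_adj hab (z := -1) ?_ ?_ ?_).reachable
    · exact Subgroup.mem_center_iff.mpr fun g => by simp
    · simpa [det_neg] using hdet
    · norm_num [htr, h]

theorem killingGraph_nontrivialUnipotents_connected (h2 : (2 : F) ≠ 0) :
    (killingGraph (nontrivialUnipotents F)).Connected := by
  obtain ⟨s, hs, -⟩ := exists_mem_nontrivialUnipotents_sub_one_eq_single (F := F)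
  have : Nonempty (nontrivialUnipotents F) := ⟨⟨s, hs⟩⟩
  refine ⟨fun a b => ?_⟩
  set c := (((a.1 : M₂) - 1) * ((b.1 : M₂) - 1)).trace with hc
  by_cases hc0 : c = 0
  · exact killingGraph_nontrivialUnipotents_reachable (.inl hc0)
  have h4 : (4 : F) ≠ 0 := by
    rw [show (4 : F) = 2 * 2 by norm_num]
    exact mul_ne_zero h2 h2
  obtain ⟨m, hm, hmA⟩ := exists_mem_nontrivialUnipotents_sub_one_eq
    (N := (-4 / c) • ((a.1 : M₂) - 1)) (smul_ne_zero (div_ne_zero (neg_ne_zero.mpr h4) hc0)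
      (Units.val_sub_one_ne_zero a.2.2)) (by rw [smul_pow, a.2.1, smul_zero])
  refine (killingGraph_nontrivialUnipotents_reachable (b := ⟨m, hm⟩) (.inl ?_)).trans
    (killingGraph_nontrivialUnipotents_reachable (.inr ?_))
  · rw [hmA, mul_smul_comm, ← sq, a.2.1, smul_zero, trace_zero]
  · rw [hmA, smul_mul_assoc, trace_smul, ← hc, smul_eq_mul, div_mul_cancel₀ _ hc0]

end GL₂

theorem statement5_general {F : Type*} [Field F] (p : ℕ) [Fact p.Prime]
    [CharP F p] (hodd : Odd p)
    (g₀ : Matrix.GeneralLinearGroup (Fin 2) F) (hg₀ : orderOf g₀ = p) :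
    (killingGraph {h : Matrix.GeneralLinearGroup (Fin 2) F | IsConj g₀ h}).Connected := by
  rw [setOf_isConj_eq_nontrivialUnipotents p hg₀]
  refine killingGraph_nontrivialUnipotents_connected (Ring.two_ne_zero ?_)
  rw [ringChar.eq F p]
  rintro rfl
  exact Nat.not_odd_iff_even.mpr even_two hodd

/-- In `GL₂(F)` over a finite field of odd characteristic `p`, the Killing graph
of a conjugacy class of elements of order `p` is connected, i.e. the Killing form
is irreducible. -/
theorem statement5 {F : Type*} [Field F] [Fintype F] (p : ℕ) [Fact p.Prime]
    [CharP F p] (hodd : Odd p)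
    (g₀ : Matrix.GeneralLinearGroup (Fin 2) F) (hg₀ : orderOf g₀ = p) :
    (killingGraph {h : Matrix.GeneralLinearGroup (Fin 2) F | IsConj g₀ h}).Connected :=
  statement5_general p hodd g₀ hg₀
end

section
/- Let α ∈ F with α ≠ 0 and α + α^q = 0, and set x = I + αE₁₃, so that x ∈ SU₃(q). Then a matrix y = (y_{ij}) ∈ SU₃(q) satisfies xy = yx if and only if y₂₁ = y₃₁ = y₃₂ = 0 and y₁₁ = y₃₃; in that case y is upper triangular and y₂₂ = y₁₁^{-2}. -/
section SU3Def

variable (F : Type*) [Field F]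

/-- Entrywise `q`-th power followed by transpose: the map `M ↦ M*`. -/
def matStar (q : ℕ) (M : Matrix (Fin 3) (Fin 3) F) : Matrix (Fin 3) (Fin 3) F :=
  (M.map fun a => a ^ q).transpose

/-- The Gram matrix of the Hermitian form, with ones on the anti-diagonal. -/
def J3 : Matrix (Fin 3) (Fin 3) F := !![0, 0, 1; 0, 1, 0; 1, 0, 0]

variable (p k : ℕ) [Fact p.Prime] [CharP F p]

lemma matStar_eq_map (M : Matrix (Fin 3) (Fin 3) F) :
    matStar F (p ^ k) M = (M.map (iterateFrobenius F p k)).transpose := rfl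

lemma matStar_mul (M N : Matrix (Fin 3) (Fin 3) F) :
    matStar F (p ^ k) (M * N) = matStar F (p ^ k) N * matStar F (p ^ k) M := by
  rw [matStar_eq_map, matStar_eq_map, matStar_eq_map, Matrix.map_mul, Matrix.transpose_mul]

lemma matStar_one : matStar F (p ^ k) (1 : Matrix (Fin 3) (Fin 3) F) = 1 := by
  rw [matStar_eq_map, Matrix.map_one _ (map_zero _) (map_one _), Matrix.transpose_one]

/-- The special unitary group `SU₃(q)`, `q = p ^ k`, as a subgroup of `SL₃(F)`,
where `F` is a field of characteristic `p` (intended to have `q ^ 2` elements):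
matrices `A` with `det A = 1` and `A* J A = J`. -/
def SU3 : Subgroup (Matrix.SpecialLinearGroup (Fin 3) F) where
  carrier := {A | matStar F (p ^ k) (↑A) * J3 F * (↑A) = J3 F}
  one_mem' := by
    simp only [Set.mem_setOf_eq, Matrix.SpecialLinearGroup.coe_one, matStar_one, one_mul, mul_one]
  mul_mem' := by
    intro A B hA hB
    simp only [Set.mem_setOf_eq] at *
    rw [Matrix.SpecialLinearGroup.coe_mul, matStar_mul]
    calc matStar F (p ^ k) ↑B * matStar F (p ^ k) ↑A * J3 F * (↑A * ↑B)
        = matStar F (p ^ k) ↑B * (matStar F (p ^ k) ↑A * J3 F * ↑A) * ↑B := by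
          simp only [mul_assoc]
      _ = matStar F (p ^ k) ↑B * J3 F * ↑B := by rw [hA]
      _ = J3 F := hB
  inv_mem' := by
    intro A hA
    simp only [Set.mem_setOf_eq] at *
    have hI : (↑A : Matrix (Fin 3) (Fin 3) F) * (↑(A⁻¹) : Matrix (Fin 3) (Fin 3) F) = 1 := by
      rw [← Matrix.SpecialLinearGroup.coe_mul]
      simp
    have h1 : matStar F (p ^ k) ↑(A⁻¹) * matStar F (p ^ k) ↑A = 1 := by
      rw [← matStar_mul, hI, matStar_one]
    calc matStar F (p ^ k) ↑(A⁻¹) * J3 F * ↑(A⁻¹)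
        = matStar F (p ^ k) ↑(A⁻¹) * (matStar F (p ^ k) ↑A * J3 F * ↑A) * ↑(A⁻¹) := by rw [hA]
      _ = matStar F (p ^ k) ↑(A⁻¹) * matStar F (p ^ k) ↑A * J3 F * (↑A * ↑(A⁻¹)) := by
          simp only [mul_assoc]
      _ = J3 F := by rw [h1, hI, one_mul, mul_one]

/-- The underlying 3×3 matrix of an element of `SU3 F p k`. -/
def su3mat (A : SU3 F p k) : Matrix (Fin 3) (Fin 3) F :=
  ((A : Matrix.SpecialLinearGroup (Fin 3) F) : Matrix (Fin 3) (Fin 3) F)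

end SU3Def

/-!
`x = 1 + α E₁₃` commutes with `y` iff `E₁₃` does. Since `E₁₃ y` carries the third row of `y`
into the first row and `y E₁₃` carries the first column of `y` into the third column, comparing
the two gives `y₂₁ = y₃₁ = y₃₂ = 0` and `y₁₁ = y₃₃`; then `1 = det y = y₁₁² y₂₂`.
That `x` is unitary comes from `x* = 1 + α^q E₃₁` and `x* J x = J + (α + α^q) E₃₃`.
-/

namespace Matrix

section Commute

variable {n R : Type*} [Fintype n] [DecidableEq n] [CommRing R] [NoZeroDivisors R]

theorem commute_single_iff {i j : n} {c : R} (hc : c ≠ 0) (y : Matrix n n R) :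
    Commute (single i j c) y ↔
      (∀ b ≠ j, y j b = 0) ∧ (∀ a ≠ i, y a i = 0) ∧ y j j = y i i := by
  constructor
  · intro h
    refine ⟨fun b hb => ?_, fun a ha => ?_, ?_⟩
    · have hib := congrFun₂ h i b
      rw [single_mul_apply_same, mul_single_apply_of_ne _ _ _ _ _ hb] at hib
      exact (mul_eq_zero.mp hib).resolve_left hc
    · have haj := congrFun₂ h a j
      rw [single_mul_apply_of_ne _ _ _ _ _ ha, mul_single_apply_same] at haj
      exact (mul_eq_zero.mp haj.symm).resolve_right hc
    · have hij := congrFun₂ h i j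
      rw [single_mul_apply_same, mul_single_apply_same, mul_comm] at hij
      exact mul_right_cancel₀ hc hij
  · rintro ⟨hrow, hcol, hdiag⟩
    ext a b
    by_cases ha : a = i <;> by_cases hb : b = j
    · subst ha hb; simp [hdiag, mul_comm]
    · subst ha; simp [hrow b hb, hb]
    · subst hb; simp [hcol a ha, ha]
    · simp [ha, hb]

theorem commute_one_add_single_iff {i j : n} {c : R} (hc : c ≠ 0) (y : Matrix n n R) :
    Commute (1 + single i j c) y ↔
      (∀ b ≠ j, y j b = 0) ∧ (∀ a ≠ i, y a i = 0) ∧ y j j = y i i := by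
  rw [← commute_single_iff hc]
  exact ⟨fun h => by simpa using h.sub_left (Commute.one_left y), (Commute.one_left y).add_left⟩

theorem commute_one_add_single_zero_two_iff {c : R} (hc : c ≠ 0)
    (y : Matrix (Fin 3) (Fin 3) R) :
    Commute (1 + single 0 2 c) y ↔ y 1 0 = 0 ∧ y 2 0 = 0 ∧ y 2 1 = 0 ∧ y 0 0 = y 2 2 := by
  rw [commute_one_add_single_iff hc]
  simp [Fin.forall_fin_succ, eq_comm (a := y 2 2)]
  tauto

end Commute

theorem det_fin_three_of_lower_eq_zero {R : Type*} [CommRing R] {y : Matrix (Fin 3) (Fin 3) R}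
    (h10 : y 1 0 = 0) (h20 : y 2 0 = 0) (h21 : y 2 1 = 0) :
    y.det = y 0 0 * y 1 1 * y 2 2 := by
  simp [det_fin_three, h10, h20, h21]

end Matrix

open Matrix

section Unitary

variable {F : Type*} [Field F] {q : ℕ}

theorem matStar_one_add_single (hq : q ≠ 0) {i j : Fin 3} (hij : i ≠ j) (a : F) :
    matStar F q (1 + single i j a) = 1 + single j i (a ^ q) := by
  ext r s
  by_cases hrs : r = s
  · subst hrs
    by_cases hi : i = r
    · subst hi; simp [matStar, hij.symm]
    · simp [matStar, one_apply, hi]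
  · by_cases hj : j = r <;> by_cases hi : i = s <;>
      simp [matStar, one_apply, hrs, Ne.symm hrs, hi, hj, zero_pow hq]

theorem matStar_one_add_single_mul_J3_mul (hq : q ≠ 0) {α : F} (hα : α + α ^ q = 0) :
    matStar F q (1 + single 0 2 α) * J3 F * (1 + single 0 2 α) = J3 F := by
  rw [matStar_one_add_single hq (by decide)]
  ext i j
  fin_cases i <;> fin_cases j <;>
    simp [J3, mul_apply, Fin.sum_univ_three, one_apply, single_apply]
  linear_combination hα

end Unitary

theorem statement7_general {F : Type*} [Field F] (p k : ℕ) [Fact p.Prime]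
    (α : F) (hα0 : α ≠ 0) (hα : α + α ^ p ^ k = 0) :
    ((1 + Matrix.single 0 2 α : Matrix (Fin 3) (Fin 3) F).det = 1 ∧
      matStar F (p ^ k) (1 + Matrix.single 0 2 α) * J3 F *
        (1 + Matrix.single 0 2 α) = J3 F) ∧
    (∀ y : Matrix (Fin 3) (Fin 3) F, y.det = 1 →
      matStar F (p ^ k) y * J3 F * y = J3 F →
      (((1 + Matrix.single 0 2 α) * y = y * (1 + Matrix.single 0 2 α)) ↔
        (y 1 0 = 0 ∧ y 2 0 = 0 ∧ y 2 1 = 0 ∧ y 0 0 = y 2 2)) ∧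
      ((1 + Matrix.single 0 2 α) * y = y * (1 + Matrix.single 0 2 α) →
        y 1 1 = (y 0 0)⁻¹ ^ 2)) := by
  have hq : p ^ k ≠ 0 := pow_ne_zero _ (Fact.out : p.Prime).ne_zero
  refine ⟨⟨det_transvection_of_ne 0 2 (by decide) α, matStar_one_add_single_mul_J3_mul hq hα⟩,
    fun y hdet _ => ⟨commute_one_add_single_zero_two_iff hα0 y, fun h => ?_⟩⟩
  obtain ⟨h10, h20, h21, h22⟩ := (commute_one_add_single_zero_two_iff hα0 y).mp h
  rw [det_fin_three_of_lower_eq_zero h10 h20 h21, ← h22] at hdet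
  have h00 : y 0 0 ≠ 0 := left_ne_zero_of_mul (left_ne_zero_of_mul_eq_one hdet)
  field_simp
  linear_combination hdet

/-- For `α ≠ 0` with `α + α^q = 0`, the matrix `x = I + α·E₁₃` lies in `SU₃(q)`,
and `y ∈ SU₃(q)` commutes with `x` iff `y₂₁ = y₃₁ = y₃₂ = 0` and `y₁₁ = y₃₃`;
in that case `y` is upper triangular with `y₂₂ = y₁₁⁻²`. -/
theorem statement7 {F : Type*} [Field F] [Fintype F] (p k : ℕ) [Fact p.Prime]
    [CharP F p] (hk : k ≠ 0) (hF : Fintype.card F = (p ^ k) ^ 2)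
    (α : F) (hα0 : α ≠ 0) (hα : α + α ^ p ^ k = 0) :
    ((1 + Matrix.single 0 2 α : Matrix (Fin 3) (Fin 3) F).det = 1 ∧
      matStar F (p ^ k) (1 + Matrix.single 0 2 α) * J3 F *
        (1 + Matrix.single 0 2 α) = J3 F) ∧
    (∀ y : Matrix (Fin 3) (Fin 3) F, y.det = 1 →
      matStar F (p ^ k) y * J3 F * y = J3 F →
      (((1 + Matrix.single 0 2 α) * y = y * (1 + Matrix.single 0 2 α)) ↔
        (y 1 0 = 0 ∧ y 2 0 = 0 ∧ y 2 1 = 0 ∧ y 0 0 = y 2 2)) ∧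
      ((1 + Matrix.single 0 2 α) * y = y * (1 + Matrix.single 0 2 α) →
        y 1 1 = (y 0 0)⁻¹ ^ 2)) :=
  statement7_general p k α hα0 hα
end

section
/- Suppose q ≡ -1 (mod 3). Let x, y ∈ SU₃(q) be upper unitriangular matrices (diagonal entries equal to 1 and entries below the diagonal equal to 0) whose (1,2)-entries x₁₂ and y₁₂ are both nonzero. Then x and y are conjugate in SU₃(q) if and only if x₁₂ = c³·y₁₂ for some nonzero c ∈ F, i.e., if and only if x₁₂/y₁₂ is a cube in the multiplicative group F^×. -/
/-! Write `q = p ^ k`; since `|F| = q²`, `z ↦ z ^ q` is an involutive field automorphism.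

A matrix conjugating one unitriangular element with nonzero `(1,2)`-entry into another must be
upper triangular, with diagonal `(t, t ^ q / t, t ^ (-q))` by unitarity and `det = 1`; comparing
`(1,2)`-entries shows that they differ by the factor `t ^ (q - 2)`, a cube because `3 ∣ q - 2`.

Conversely, conjugating by the torus element `diag(s, s ^ q / s, s ^ (-q))` multiplies the
`(1,2)`-entry by `s ^ (2 - q)`, and `s = c ^ (q + 2)` gives the factor `c ^ 3` because
`c ^ (q²) = c`. Unitriangular elements with equal `(1,2)`-entry `a` are conjugate under the
unitriangular subgroup: the `(1,3)`-entries `b` satisfy `b + b ^ q = -a a ^ q`, and the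
conjugator is found by solving `z ^ q - z = w` (for `w ^ q = -w`) and `z ^ q + z = w`
(for `w ^ q = w`). Both are solvable by counting: `z ↦ z ^ q ∓ z` is additive with kernel of
size at most `q`, so its image has at least `q` elements and fills the target, a set of roots of
a polynomial of degree `q`. -/

open Polynomial in
theorem ncard_setOf_pow_eq_mul_le {F : Type*} [Field F] {n : ℕ} (hn : 2 ≤ n) (a : F) :
    {z : F | z ^ n = a * z}.ncard ≤ n := by
  classical
  set P : F[X] := X ^ n - C a * X
  have hdeg : P.natDegree = n := by
    rw [natDegree_sub_eq_left_of_natDegree_lt] <;> rw [natDegree_X_pow]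
    exact (natDegree_C_mul_le a X).trans_lt (by rw [natDegree_X]; omega)
  have hP : P ≠ 0 := by
    rintro h
    rw [h, natDegree_zero] at hdeg
    omega
  calc {z : F | z ^ n = a * z}.ncard ≤ (P.roots.toFinset : Set F).ncard := by
        refine Set.ncard_le_ncard (fun z hz => ?_) (Finset.finite_toSet _)
        simp_all [P, sub_eq_zero]
    _ ≤ n := by
        rw [Set.ncard_coe_finset, ← hdeg]
        exact (Multiset.toFinset_card_le _).trans (card_roots' P)

theorem pow_pow_eq_self_of_card_eq_sq {F : Type*} [Field F] [Fintype F] {q : ℕ}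
    (hF : Fintype.card F = q ^ 2) (z : F) : (z ^ q) ^ q = z := by
  rw [← pow_mul, ← sq, ← hF, FiniteField.pow_card]

theorem exists_pow_sub_mul_eq {F : Type*} [Field F] [Fintype F] {p k : ℕ} [Fact p.Prime]
    [CharP F p] (hF : Fintype.card F = (p ^ k) ^ 2) {ε : F} (hε : ε * ε = 1)
    (hεq : ε ^ p ^ k = ε) {w : F} (hw : w ^ p ^ k = -(ε * w)) :
    ∃ z : F, z ^ p ^ k - ε * z = w := by
  have hq : 2 ≤ p ^ k :=
    lt_of_pow_lt_pow_left₀ 2 (Nat.zero_le _) (by rw [one_pow, ← hF]; exact Fintype.one_lt_card)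
  let L : F →+ F := (iterateFrobenius F p k).toAddMonoidHom - AddMonoidHom.mulLeft ε
  have hL : ∀ z, L z = z ^ p ^ k - ε * z := fun z => rfl
  have hker : (L.ker : Set F) = {z | z ^ p ^ k = ε * z} := by
    ext z
    simp [hL, sub_eq_zero]
  have hrange : (L.range : Set F) ⊆ {w | w ^ p ^ k = -(ε * w)} := by
    rintro _ ⟨z, rfl⟩
    show (L z) ^ p ^ k = -(ε * L z)
    rw [hL, sub_pow_char_pow, mul_pow, hεq, pow_pow_eq_self_of_card_eq_sq hF]
    linear_combination (-z) * hε
  have hcard : (p ^ k) ^ 2 ≤ p ^ k * (L.range : Set F).ncard := by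
    have hker_card : Nat.card L.ker = {z : F | z ^ p ^ k = ε * z}.ncard := by
      rw [← hker]
      exact Nat.card_coe_set_eq _
    rw [← hF, ← Nat.card_eq_fintype_card, ← L.ker.card_mul_index, AddSubgroup.index_ker,
      hker_card]
    exact Nat.mul_le_mul_right _ (ncard_setOf_pow_eq_mul_le hq ε)
  have htarget : {w : F | w ^ p ^ k = -(ε * w)}.ncard ≤ (L.range : Set F).ncard := by
    simp_rw [← neg_mul]
    exact (ncard_setOf_pow_eq_mul_le hq (-ε)).trans
      (Nat.le_of_mul_le_mul_left (by rwa [← sq]) (by omega))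
  obtain ⟨z, hz⟩ : w ∈ (L.range : Set F) :=
    (Set.eq_of_subset_of_ncard_le hrange htarget (Set.toFinite _)) ▸ hw
  exact ⟨z, hz⟩

section UpperTriangular

variable {F : Type*} [Field F]

theorem matStar_mul_J3_mul_upperTriangular {q : ℕ} (hq : q ≠ 0) (t u v e w f : F) :
    matStar F q !![t, u, v; 0, e, w; 0, 0, f] * J3 F * !![t, u, v; 0, e, w; 0, 0, f] =
      !![0, 0, t ^ q * f; 0, e ^ q * e, u ^ q * f + e ^ q * w;
        f ^ q * t, w ^ q * e + f ^ q * u, v ^ q * f + w ^ q * w + f ^ q * v] := by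
  ext i j
  fin_cases i <;> fin_cases j <;>
    simp only [matStar, J3, Matrix.transpose_apply, Matrix.map_apply, Matrix.mul_apply,
      Fin.sum_univ_three, Matrix.of_apply, Fin.zero_eta, Fin.mk_one, Fin.reduceFinMk, Fin.isValue,
      Matrix.cons_val', Matrix.cons_val, Matrix.cons_val_zero, Matrix.cons_val_one,
      Matrix.cons_val_fin_one, zero_pow hq, zero_mul, mul_zero, add_zero, zero_add, mul_one] <;>
    ring

theorem upperTriangular_of_mul_unitriangular_eq {G : Matrix (Fin 3) (Fin 3) F}
    {a b c a' b' c' : F} (ha : a ≠ 0) (hc : c ≠ 0)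
    (h : G * !![1, a, b; 0, 1, c; 0, 0, 1] = !![1, a', b'; 0, 1, c'; 0, 0, 1] * G) :
    G = !![G 0 0, G 0 1, G 0 2; 0, G 1 1, G 1 2; 0, 0, G 2 2] ∧ G 0 0 * a = a' * G 1 1 := by
  have e : ∀ i j, (G * !![1, a, b; 0, 1, c; 0, 0, 1]) i j
      = (!![1, a', b'; 0, 1, c'; 0, 0, 1] * G) i j := fun i j => by rw [h]
  have e21 := e 2 1
  have e22 := e 2 2
  have e11 := e 1 1
  have e01 := e 0 1
  simp only [Matrix.mul_apply, Fin.sum_univ_three, Matrix.of_apply, Fin.isValue,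
    Matrix.cons_val', Matrix.cons_val, Matrix.cons_val_zero, Matrix.cons_val_one,
    Matrix.cons_val_fin_one, mul_one, mul_zero, add_zero, zero_mul, one_mul, zero_add,
    add_eq_right] at e21 e22 e11 e01
  have h20 : G 2 0 = 0 := (mul_eq_zero.1 e21).resolve_right ha
  have h21 : G 2 1 = 0 := by simpa [h20, hc] using e22
  have h10 : G 1 0 = 0 := by simpa [h21, ha] using e11
  refine ⟨?_, by linear_combination e01 + b' * h21⟩
  simpa [h10, h20, h21] using Matrix.eta_fin_three G

end UpperTriangular

section SU3Elements

variable {F : Type*} [Field F] {p k : ℕ} [Fact p.Prime] [CharP F p]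

theorem su3mat_mul (g x : SU3 F p k) :
    su3mat F p k (g * x) = su3mat F p k g * su3mat F p k x :=
  rfl

theorem su3mat_injective : Function.Injective (su3mat F p k) :=
  fun _ _ h => Subtype.ext (Subtype.ext h)

theorem isConj_iff_exists_su3mat_mul_eq {x y : SU3 F p k} :
    IsConj x y ↔
      ∃ g : SU3 F p k, su3mat F p k g * su3mat F p k x = su3mat F p k y * su3mat F p k g := by
  simp only [isConj_iff, mul_inv_eq_iff_eq_mul, ← su3mat_mul, su3mat_injective.eq_iff]

theorem matStar_su3mat_mul_J3_mul (g : SU3 F p k) :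
    matStar F (p ^ k) (su3mat F p k g) * J3 F * su3mat F p k g = J3 F :=
  g.2

theorem exists_su3mat_eq_upperTriangular {t u v e w f : F}
    (h00 : t ^ p ^ k * f = 1) (h11 : e ^ p ^ k * e = 1) (h20 : f ^ p ^ k * t = 1)
    (h12 : u ^ p ^ k * f + e ^ p ^ k * w = 0) (h21 : w ^ p ^ k * e + f ^ p ^ k * u = 0)
    (h22 : v ^ p ^ k * f + w ^ p ^ k * w + f ^ p ^ k * v = 0) (hdet : t * e * f = 1) :
    ∃ g : SU3 F p k, su3mat F p k g = !![t, u, v; 0, e, w; 0, 0, f] := by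
  refine ⟨⟨⟨!![t, u, v; 0, e, w; 0, 0, f], ?_⟩, ?_⟩, rfl⟩
  · simpa [Matrix.det_fin_three, mul_assoc] using hdet
  · show matStar F (p ^ k) _ * J3 F * _ = J3 F
    rw [matStar_mul_J3_mul_upperTriangular (pow_ne_zero k (Fact.out : p.Prime).ne_zero)]
    simp [J3, *]

theorem pow_mul_eq_one_of_su3mat_eq_upperTriangular {g : SU3 F p k} {t u v e w f : F}
    (hg : su3mat F p k g = !![t, u, v; 0, e, w; 0, 0, f]) :
    t ^ p ^ k * f = 1 ∧ t * e * f = 1 := by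
  have hunit := matStar_su3mat_mul_J3_mul g
  have hdet : (su3mat F p k g).det = 1 := g.1.2
  rw [hg, matStar_mul_J3_mul_upperTriangular (pow_ne_zero k (Fact.out : p.Prime).ne_zero)]
    at hunit
  rw [hg] at hdet
  refine ⟨by simpa [J3] using congrFun (congrFun hunit 0) 2, ?_⟩
  simpa [Matrix.det_fin_three, mul_assoc] using hdet

theorem su3mat_eq_unitriangular {x : SU3 F p k}
    (hlow : su3mat F p k x 1 0 = 0 ∧ su3mat F p k x 2 0 = 0 ∧ su3mat F p k x 2 1 = 0)
    (hdiag : su3mat F p k x 0 0 = 1 ∧ su3mat F p k x 1 1 = 1 ∧ su3mat F p k x 2 2 = 1) :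
    su3mat F p k x = !![1, su3mat F p k x 0 1, su3mat F p k x 0 2;
      0, 1, su3mat F p k x 1 2; 0, 0, 1] := by
  obtain ⟨h10, h20, h21⟩ := hlow
  obtain ⟨h00, h11, h22⟩ := hdiag
  simpa [h10, h20, h21, h00, h11, h22] using Matrix.eta_fin_three (su3mat F p k x)

theorem unitriangular_entries_of_su3mat_eq {x : SU3 F p k} {a b c : F}
    (hx : su3mat F p k x = !![1, a, b; 0, 1, c; 0, 0, 1]) :
    c = -a ^ p ^ k ∧ b + b ^ p ^ k + a * a ^ p ^ k = 0 := by
  have hunit := matStar_su3mat_mul_J3_mul x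
  rw [hx, matStar_mul_J3_mul_upperTriangular (pow_ne_zero k (Fact.out : p.Prime).ne_zero)]
    at hunit
  have h12 := congrFun (congrFun hunit 1) 2
  have h21 := congrFun (congrFun hunit 2) 1
  have h22 := congrFun (congrFun hunit 2) 2
  simp only [J3, one_pow, mul_one, one_mul, Fin.isValue, Matrix.of_apply, Matrix.cons_val',
    Matrix.cons_val, Matrix.cons_val_fin_one, Matrix.cons_val_one, Matrix.cons_val_zero]
    at h12 h21 h22
  exact ⟨by linear_combination h12, by linear_combination h22 - c * h21 + a * h12⟩

theorem exists_mul_sq_eq_of_isConj {x y : SU3 F p k} {a b c a' b' c' : F} (ha : a ≠ 0)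
    (hc : c ≠ 0) (hx : su3mat F p k x = !![1, a, b; 0, 1, c; 0, 0, 1])
    (hy : su3mat F p k y = !![1, a', b'; 0, 1, c'; 0, 0, 1]) (hxy : IsConj x y) :
    ∃ t : F, t ≠ 0 ∧ a * t ^ 2 = a' * t ^ p ^ k := by
  obtain ⟨g, hg⟩ := isConj_iff_exists_su3mat_mul_eq.1 hxy
  rw [hx, hy] at hg
  obtain ⟨htri, hdiag⟩ := upperTriangular_of_mul_unitriangular_eq ha hc hg
  obtain ⟨h00, hdet⟩ := pow_mul_eq_one_of_su3mat_eq_upperTriangular htri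
  set t := su3mat F p k g 0 0
  refine ⟨t, fun ht => by simp [ht, (Fact.out : p.Prime).ne_zero] at h00, ?_⟩
  linear_combination (-(a * t ^ 2)) * h00 + (t ^ p ^ k * su3mat F p k g 2 2 * t) * hdiag
    + (a' * t ^ p ^ k) * hdet

theorem isConj_of_su3mat_eq_unitriangular [Fintype F] (hF : Fintype.card F = (p ^ k) ^ 2)
    {x y : SU3 F p k} {a b c b' c' : F} (ha : a ≠ 0)
    (hx : su3mat F p k x = !![1, a, b; 0, 1, c; 0, 0, 1])
    (hy : su3mat F p k y = !![1, a, b'; 0, 1, c'; 0, 0, 1]) : IsConj x y := by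
  obtain ⟨rfl, hb⟩ := unitriangular_entries_of_su3mat_eq hx
  obtain ⟨rfl, hb'⟩ := unitriangular_entries_of_su3mat_eq hy
  have hinv := pow_pow_eq_self_of_card_eq_sq hF
  have haa : a * a ^ p ^ k ≠ 0 := mul_ne_zero ha (pow_ne_zero _ ha)
  obtain ⟨z, hz⟩ : ∃ z : F, z ^ p ^ k - 1 * z = (b' - b) / (a * a ^ p ^ k) := by
    refine exists_pow_sub_mul_eq hF (mul_one 1) (one_pow _) ?_
    rw [div_pow, sub_pow_char_pow, mul_pow, hinv, mul_comm (a ^ p ^ k)]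
    linear_combination (hb' - hb) / (a * a ^ p ^ k)
  set r := a * z
  obtain ⟨s, hs⟩ : ∃ s : F, s ^ p ^ k - (-1) * s = -(r * r ^ p ^ k) := by
    refine exists_pow_sub_mul_eq hF (by ring) (neg_one_pow_char_pow F p k) ?_
    rw [neg_pow, neg_one_pow_char_pow, mul_pow, hinv]
    ring
  obtain ⟨u, hu⟩ : ∃ u : SU3 F p k, su3mat F p k u = !![1, r, s; 0, 1, -r ^ p ^ k; 0, 0, 1] :=
    exists_su3mat_eq_upperTriangular (by simp) (by simp) (by simp) (by simp)
      (by rw [neg_pow, neg_one_pow_char_pow, hinv]; ring)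
      (by rw [neg_pow, neg_one_pow_char_pow, hinv]; linear_combination hs) (by simp)
  have h02 : a * r ^ p ^ k - r * a ^ p ^ k = b' - b := by
    rw [eq_div_iff haa] at hz
    rw [mul_pow]
    linear_combination hz
  refine isConj_iff_exists_su3mat_mul_eq.2 ⟨u, ?_⟩
  rw [hu, hx, hy]
  ext i j
  fin_cases i <;> fin_cases j <;>
    simp only [Matrix.mul_apply, Fin.sum_univ_three, Matrix.of_apply, Fin.zero_eta, Fin.mk_one,
      Fin.reduceFinMk, Fin.isValue, Matrix.cons_val', Matrix.cons_val, Matrix.cons_val_zero,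
      Matrix.cons_val_one, Matrix.cons_val_fin_one, mul_one, one_mul, mul_zero, zero_mul,
      add_zero, zero_add, mul_neg, neg_zero] <;>
    first | ring1 | linear_combination h02

theorem exists_isConj_su3mat_eq_unitriangular_mul_sq_div [Fintype F]
    (hF : Fintype.card F = (p ^ k) ^ 2) {y : SU3 F p k} {a b c s : F}
    (hy : su3mat F p k y = !![1, a, b; 0, 1, c; 0, 0, 1]) (hs : s ≠ 0) :
    ∃ (y' : SU3 F p k) (b' c' : F), IsConj y y' ∧
      su3mat F p k y' = !![1, a * s ^ 2 / s ^ p ^ k, b'; 0, 1, c'; 0, 0, 1] := by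
  have hinv := pow_pow_eq_self_of_card_eq_sq hF
  have hp : p ≠ 0 := (Fact.out : p.Prime).ne_zero
  have hsq : s ^ p ^ k ≠ 0 := pow_ne_zero _ hs
  set e := s ^ p ^ k / s
  set f := (s ^ p ^ k)⁻¹
  have he : e ≠ 0 := div_ne_zero hsq hs
  have hf : f ≠ 0 := inv_ne_zero hsq
  obtain ⟨d, hd⟩ : ∃ d : SU3 F p k, su3mat F p k d = !![s, 0, 0; 0, e, 0; 0, 0, f] :=
    exists_su3mat_eq_upperTriangular (mul_inv_cancel₀ hsq)
      (by simp only [e, div_pow, hinv]; field_simp) (by rw [inv_pow, hinv, inv_mul_cancel₀ hs])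
      (by simp [hp]) (by simp [hp]) (by simp [hp]) (by simp only [e, f]; field_simp)
  set M := su3mat F p k (d * y * d⁻¹)
  have hM : M * su3mat F p k d = su3mat F p k d * su3mat F p k y := by
    simp only [M, ← su3mat_mul, inv_mul_cancel_right]
  rw [hd, hy] at hM
  have E : ∀ i j, (M * !![s, 0, 0; 0, e, 0; 0, 0, f]) i j
      = (!![s, 0, 0; 0, e, 0; 0, 0, f] * !![1, a, b; 0, 1, c; 0, 0, 1]) i j :=
    fun i j => by rw [hM]
  have E00 := E 0 0
  have E01 := E 0 1
  have E10 := E 1 0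
  have E11 := E 1 1
  have E20 := E 2 0
  have E21 := E 2 1
  have E22 := E 2 2
  simp only [Matrix.mul_apply, Fin.sum_univ_three, Matrix.of_apply, Fin.isValue,
    Matrix.cons_val', Matrix.cons_val, Matrix.cons_val_zero, Matrix.cons_val_one,
    Matrix.cons_val_fin_one, mul_zero, zero_mul, mul_one, add_zero, zero_add, ne_eq,
    not_false_eq_true, mul_eq_right₀, mul_eq_zero, or_false, hs, he, hf]
    at E00 E01 E10 E11 E20 E21 E22
  have hM01 : M 0 1 = a * s ^ 2 / s ^ p ^ k := by
    rw [eq_div_iff hsq]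
    simp only [e] at E01
    field_simp at E01
    linear_combination E01
  refine ⟨d * y * d⁻¹, M 0 2, M 1 2, isConj_iff.2 ⟨d, rfl⟩, ?_⟩
  simpa [E00, E10, E11, E20, E21, E22, hM01] using Matrix.eta_fin_three M

end SU3Elements

theorem exists_cube_mul_of_mul_sq_eq {F : Type*} [Field F] {q : ℕ} (hq : q % 3 = 2)
    {a a' t : F} (ht : t ≠ 0) (h : a * t ^ 2 = a' * t ^ q) : ∃ c : F, c ≠ 0 ∧ a = c ^ 3 * a' := by
  obtain ⟨m, rfl⟩ : ∃ m, q = 3 * m + 2 := ⟨q / 3, by omega⟩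
  refine ⟨t ^ m, pow_ne_zero _ ht, mul_right_cancel₀ (pow_ne_zero 2 ht) ?_⟩
  linear_combination h

theorem pow_add_two_sq_of_card_eq_sq {F : Type*} [Field F] [Fintype F] {q : ℕ}
    (hF : Fintype.card F = q ^ 2) (c : F) : (c ^ (q + 2)) ^ 2 = c ^ 3 * (c ^ (q + 2)) ^ q := by
  have hc : c ^ q ^ 2 = c := hF ▸ FiniteField.pow_card c
  calc (c ^ (q + 2)) ^ 2 = c ^ 3 * c ^ q ^ 2 * c ^ (2 * q) := by rw [hc]; ring
    _ = c ^ 3 * (c ^ (q + 2)) ^ q := by ring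

theorem statement12_general {F : Type*} [Field F] [Fintype F] (p k : ℕ) [Fact p.Prime]
    [CharP F p] (hF : Fintype.card F = (p ^ k) ^ 2)
    (hq : p ^ k % 3 = 2)
    (x y : SU3 F p k)
    (hxlow : su3mat F p k x 1 0 = 0 ∧ su3mat F p k x 2 0 = 0 ∧ su3mat F p k x 2 1 = 0)
    (hxdiag : su3mat F p k x 0 0 = 1 ∧ su3mat F p k x 1 1 = 1 ∧ su3mat F p k x 2 2 = 1)
    (hx12 : su3mat F p k x 0 1 ≠ 0)
    (hylow : su3mat F p k y 1 0 = 0 ∧ su3mat F p k y 2 0 = 0 ∧ su3mat F p k y 2 1 = 0)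
    (hydiag : su3mat F p k y 0 0 = 1 ∧ su3mat F p k y 1 1 = 1 ∧ su3mat F p k y 2 2 = 1) :
    IsConj x y ↔ ∃ c : F, c ≠ 0 ∧ su3mat F p k x 0 1 = c ^ 3 * su3mat F p k y 0 1 := by
  have hx := su3mat_eq_unitriangular hxlow hxdiag
  have hy := su3mat_eq_unitriangular hylow hydiag
  constructor
  · intro hxy
    have hx12' : su3mat F p k x 1 2 ≠ 0 := by
      rw [(unitriangular_entries_of_su3mat_eq hx).1]
      exact neg_ne_zero.2 (pow_ne_zero _ hx12)
    obtain ⟨t, ht, hxyt⟩ := exists_mul_sq_eq_of_isConj hx12 hx12' hx hy hxy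
    exact exists_cube_mul_of_mul_sq_eq hq ht hxyt
  · rintro ⟨c, hc, hxyc⟩
    obtain ⟨y', b', c', hyy', hy'⟩ :=
      exists_isConj_su3mat_eq_unitriangular_mul_sq_div hF hy (pow_ne_zero (p ^ k + 2) hc)
    rw [pow_add_two_sq_of_card_eq_sq hF, ← mul_assoc, mul_comm _ (c ^ 3), ← hxyc,
      mul_div_cancel_right₀ _ (pow_ne_zero _ (pow_ne_zero _ hc))] at hy'
    exact (isConj_of_su3mat_eq_unitriangular hF hx12 hx hy').trans hyy'.symm

/-- Suppose `q ≡ -1 (mod 3)`. Two upper unitriangular elements `x, y` of `SU₃(q)`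
with nonzero `(1,2)`-entries are conjugate in `SU₃(q)` iff `x₁₂ = c³ · y₁₂` for
some nonzero `c ∈ F`. -/
theorem statement12 {F : Type*} [Field F] [Fintype F] (p k : ℕ) [Fact p.Prime]
    [CharP F p] (hk : k ≠ 0) (hF : Fintype.card F = (p ^ k) ^ 2)
    (hq : p ^ k % 3 = 2)
    (x y : SU3 F p k)
    (hxlow : su3mat F p k x 1 0 = 0 ∧ su3mat F p k x 2 0 = 0 ∧ su3mat F p k x 2 1 = 0)
    (hxdiag : su3mat F p k x 0 0 = 1 ∧ su3mat F p k x 1 1 = 1 ∧ su3mat F p k x 2 2 = 1)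
    (hx12 : su3mat F p k x 0 1 ≠ 0)
    (hylow : su3mat F p k y 1 0 = 0 ∧ su3mat F p k y 2 0 = 0 ∧ su3mat F p k y 2 1 = 0)
    (hydiag : su3mat F p k y 0 0 = 1 ∧ su3mat F p k y 1 1 = 1 ∧ su3mat F p k y 2 2 = 1)
    (hy12 : su3mat F p k y 0 1 ≠ 0) :
    IsConj x y ↔ ∃ c : F, c ≠ 0 ∧ su3mat F p k x 0 1 = c ^ 3 * su3mat F p k y 0 1 :=
  statement12_general p k hF hq x y hxlow hxdiag hx12 hylow hydiag
end

section
/- Let n ≥ 2, let x be an involution (element of order 2) in the alternating group Aₙ on n letters, let 𝒞 be the conjugacy class of x in Aₙ, and let s denote the number of fixed points of x in its natural action on n letters. Then the commuting graph on 𝒞 is disconnected if and only if n ≡ 1 (mod 4) and s = 1. -/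
/-!
Write `X` for the permutation underlying `x`. It commutes with the transposition `(p  X p)` for
any `p` it moves, so its class in `Aₙ` is its class in `Sₙ`, on whose commuting graph `Sₙ` acts
by automorphisms.
Hence the `k ∈ Sₙ` for which `k X k⁻¹` lies in the component of `X` form a subgroup, and the graph
is connected as soon as this subgroup contains every transposition.

For a transposition `τ = (p q)` we have `X (τ X τ) = (X τ X) τ` with `X τ X = (X p  X q)`, so `X`
commutes with `τ X τ` whenever `p, q` are both fixed or both moved by `X`. For `p` moved and `q`
fixed, a second fixed point `g` and `p' = X p` give `σ = (p q)(p' g)`, for which `X σ X` and `σ`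
are two of the three double transpositions of `{p, q, p', g}`, hence commute; conjugating `(p' a)`
by `σ`, for a moved point `a ∉ {p, p'}` (there are at least four moved points, since `X` is even),
yields the transposition `(g a)` between a fixed and a moved point, and all others are
conjugate to it by products of transpositions of the first kind.

If `X` has a single fixed point `q`, an element commuting with a conjugate of `X` that fixes `q`
must fix `q` too, so the conjugates fixing `q` form a union of components, and `(q a) X (q a)`
for a moved point `a` is not among them. The congruence `n ≡ 1 (mod 4)` follows because an even
product of disjoint transpositions involves an even number of them.
-/

open Equiv Equiv.Perm Function Set
open scoped Finset

theorem SimpleGraph.Reachable.imp_of_adj {V : Type*} {G : SimpleGraph V} {P : V → Prop}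
    (hP : ∀ u v, G.Adj u v → P u → P v) {u v : V} (h : G.Reachable u v) (hu : P u) : P v := by
  rw [SimpleGraph.reachable_iff_reflTransGen] at h
  induction h with
  | refl => exact hu
  | tail _ hadj ih => exact hP _ _ hadj ih

section CommGraph

variable {G : Type*} [Group G]

theorem commGraph_adj {C : Set G} {a b : C} :
    (commGraph C).Adj a b ↔ a ≠ b ∧ Commute (a : G) b := by
  simp [commGraph, Commute.symm_iff]

def commGraphHom {G' : Type*} [Group G'] (f : G →* G') (hf : Injective f) {C : Set G}
    {D : Set G'} (hCD : MapsTo f C D) : commGraph C →g commGraph D where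
  toFun a := ⟨f a, hCD a.2⟩
  map_rel' {a b} h := by
    rw [commGraph_adj] at h ⊢
    exact ⟨fun hab => h.1 (Subtype.ext (hf (congrArg Subtype.val hab))), h.2.map f⟩

variable {K : Type*} [Group K] (φ : K →* MulAut G) (x : G)

def orbitVertex (k : K) : range fun k => φ k x := ⟨φ k x, k, rfl⟩

def orbitCommGraphHom (a : K) :
    commGraph (range fun k => φ k x) →g commGraph (range fun k => φ k x) :=
  commGraphHom (φ a).toMonoidHom (φ a).injective <| by
    rintro _ ⟨k, rfl⟩
    exact ⟨a * k, by simp⟩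

theorem orbitCommGraphHom_orbitVertex (a k : K) :
    orbitCommGraphHom φ x a (orbitVertex φ x k) = orbitVertex φ x (a * k) :=
  Subtype.ext (by simp [orbitCommGraphHom, commGraphHom, orbitVertex])

def reachableSubgroup : Subgroup K where
  carrier := {k | (commGraph (range fun k => φ k x)).Reachable
    (orbitVertex φ x 1) (orbitVertex φ x k)}
  one_mem' := SimpleGraph.Reachable.refl _
  mul_mem' {a b} ha hb := by
    have := hb.map (orbitCommGraphHom φ x a)
    rw [orbitCommGraphHom_orbitVertex, orbitCommGraphHom_orbitVertex, mul_one] at this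
    exact ha.trans this
  inv_mem' {a} ha := by
    have := ha.map (orbitCommGraphHom φ x a⁻¹)
    rw [orbitCommGraphHom_orbitVertex, orbitCommGraphHom_orbitVertex, mul_one,
      inv_mul_cancel] at this
    exact this.symm

variable {φ x}

theorem mem_reachableSubgroup_of_commute {k : K} (h : Commute x (φ k x)) :
    k ∈ reachableSubgroup φ x := by
  by_cases hk : φ k x = x
  · have : orbitVertex φ x k = orbitVertex φ x 1 := Subtype.ext (by simp [orbitVertex, hk])
    change (commGraph _).Reachable _ _
    rw [this]
  · refine SimpleGraph.Adj.reachable (commGraph_adj.mpr ⟨?_, by simpa [orbitVertex] using h⟩)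
    exact fun h1k => hk (by simpa [orbitVertex] using (congrArg Subtype.val h1k).symm)

theorem connected_of_reachableSubgroup_eq_top (h : reachableSubgroup φ x = ⊤) :
    (commGraph (range fun k => φ k x)).Connected := by
  have hreach : ∀ v, (commGraph (range fun k => φ k x)).Reachable (orbitVertex φ x 1) v := by
    rintro ⟨_, k, rfl⟩
    exact (h ▸ Subgroup.mem_top k : k ∈ reachableSubgroup φ x)
  rw [SimpleGraph.connected_iff_exists_forall_reachable]
  exact ⟨_, hreach⟩

end CommGraph

theorem commute_conj_of_commute_conj {G : Type*} [Group G] {x g : G} (hx : x⁻¹ = x)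
    (hg : g⁻¹ = g) (h : Commute (x * g * x⁻¹) g) : Commute x (g * x * g⁻¹) := by
  rw [hx] at h
  rw [hg]
  simpa only [Commute, SemiconjBy, mul_assoc] using h

namespace Equiv.Perm

theorem conj_apply_eq_self_iff {α : Type*} (k σ : Perm α) (a : α) :
    (k * σ * k⁻¹) a = a ↔ σ (k⁻¹ a) = k⁻¹ a := by
  rw [mul_apply, mul_apply, ← eq_inv_iff_eq]

theorem apply_apply_of_inv_eq {α : Type*} {σ : Perm α} (hσ : σ⁻¹ = σ) (a : α) :
    σ (σ a) = a := by
  nth_rewrite 1 [← hσ]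
  exact inv_eq_iff_eq.mpr rfl

variable {α : Type*} [DecidableEq α]

theorem commute_swap_apply {σ : Perm α} (hσ : σ⁻¹ = σ) (a : α) : Commute σ (swap a (σ a)) := by
  apply mul_inv_eq_iff_eq_mul.mp
  rw [← swap_apply_apply, apply_apply_of_inv_eq hσ, swap_comm]

theorem commute_swap_mul_swap {a b c d : α} (h : [a, b, c, d].Nodup) :
    Commute (swap a b * swap c d) (swap c b * swap a d) := by
  have h' := h
  simp only [List.nodup_cons, List.mem_cons, List.not_mem_nil, not_or] at h'
  obtain ⟨⟨hab, hac, had, -⟩, ⟨hbc, hbd, -⟩, ⟨hcd, -⟩, -⟩ := h'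
  apply mul_inv_eq_iff_eq_mul.mp
  rw [← conj_mul, ← swap_apply_apply, ← swap_apply_apply]
  simp only [mul_apply, swap_apply_def, hab, hac, had, hbc, hbd, hcd, Ne.symm hab,
    Ne.symm hac, Ne.symm had, Ne.symm hbc, Ne.symm hbd, Ne.symm hcd, if_true, if_false]
  rw [swap_comm d, swap_comm b]
  exact (disjoint_swap_swap
    (by simp [*, Ne.symm hbc, Ne.symm hac, Ne.symm hab])).commute.eq.symm

theorem swap_apply_mem {H : Subgroup (Perm α)} {k : Perm α} (hk : k ∈ H) {a b : α}
    (h : swap a b ∈ H) : swap (k a) (k b) ∈ H := by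
  rw [swap_apply_apply]
  exact H.mul_mem (H.mul_mem hk h) (H.inv_mem hk)

variable [Fintype α]

theorem card_fixed_add_card_support (σ : Perm α) :
    #{a | σ a = a} + #σ.support = Fintype.card α :=
  Finset.card_filter_add_card_filter_not _

theorem four_dvd_card_support {σ : Perm α} (h2 : σ ^ 2 = 1) (hσ : sign σ = 1) :
    4 ∣ #σ.support := by
  have hcycle : ∀ c ∈ σ.cycleType, c = 2 := fun c hc =>
    le_antisymm (Nat.le_of_dvd two_pos
      ((dvd_of_mem_cycleType hc).trans (orderOf_dvd_of_pow_eq_one h2)))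
      (two_le_of_mem_cycleType hc)
  obtain ⟨k, hk⟩ : ∃ k, σ.cycleType = Multiset.replicate k 2 :=
    ⟨_, Multiset.eq_replicate_card.mpr hcycle⟩
  rw [sign_of_cycleType, hk, Multiset.sum_replicate, Multiset.card_replicate, smul_eq_mul,
    neg_one_pow_eq_one_iff_even (by decide)] at hσ
  rw [← sum_cycleType, hk, Multiset.sum_replicate, smul_eq_mul]
  obtain ⟨m, hm⟩ := hσ
  omega

end Equiv.Perm

section Alternating

variable {α : Type*} [DecidableEq α] [Fintype α]

theorem setOf_isConj_eq_range_conjNormal {x : alternatingGroup α} {t : Perm α}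
    (ht : sign t = -1) (hxt : Commute t x) :
    {y | IsConj x y} = range fun k : Perm α => MulAut.conjNormal k x := by
  ext y
  constructor
  · intro hy
    obtain ⟨c, rfl⟩ := isConj_iff.mp hy
    exact ⟨c, Subtype.ext (by simp [MulAut.conjNormal_apply])⟩
  · rintro ⟨k, rfl⟩
    rcases Int.units_eq_one_or (sign k) with hk | hk
    · exact isConj_iff.mpr ⟨⟨k, hk⟩, Subtype.ext (by simp [MulAut.conjNormal_apply])⟩
    · refine isConj_iff.mpr ⟨⟨k * t, by simp [mem_alternatingGroup, hk, ht]⟩, Subtype.ext ?_⟩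
      simp only [Subgroup.coe_mul, Subgroup.coe_inv, MulAut.conjNormal_apply]
      rw [mul_assoc k t, hxt.eq]
      group

variable {X : Perm α} (hX : X ∈ alternatingGroup α)

theorem mem_reachableSubgroup_conjNormal {k : Perm α} (h : Commute X (k * X * k⁻¹)) :
    k ∈ reachableSubgroup MulAut.conjNormal (⟨X, hX⟩ : alternatingGroup α) :=
  mem_reachableSubgroup_of_commute (Subtype.ext (by simpa [MulAut.conjNormal_apply] using h.eq))

theorem not_connected_of_apply_eq_self_iff (hX1 : X ≠ 1) {q : α} (hq : ∀ a, X a = a ↔ a = q) :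
    ¬ (commGraph (range fun k : Perm α =>
      MulAut.conjNormal k (⟨X, hX⟩ : alternatingGroup α))).Connected := by
  have hconj : ∀ (k : Perm α) a, (k * X * k⁻¹) a = a ↔ a = k q := fun k a => by
    rw [conj_apply_eq_self_iff, hq, inv_eq_iff_eq]
  have hstep : ∀ u v : range fun k : Perm α =>
        MulAut.conjNormal k (⟨X, hX⟩ : alternatingGroup α),
      (commGraph _).Adj u v → ((u : alternatingGroup α) : Perm α) q = q →
        ((v : alternatingGroup α) : Perm α) q = q := by
    rintro ⟨_, k, rfl⟩ ⟨_, l, rfl⟩ huv hkq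
    have hc := (commGraph_adj.mp huv).2.map (alternatingGroup α).subtype
    simp only [MulAut.conjNormal_apply, Subgroup.coe_subtype] at hkq hc ⊢
    have hvq : (l * X * l⁻¹) q = k q :=
      (hconj k _).mp (by rw [← mul_apply, hc.eq, mul_apply, hkq])
    rw [hvq, ← (hconj k q).mp hkq]
  obtain ⟨a, ha⟩ : ∃ a, X a ≠ a := not_forall.mp fun h => hX1 (Perm.ext h)
  intro hconn
  have := (hconn.preconnected (orbitVertex _ _ 1) (orbitVertex _ _ (swap q a))).imp_of_adj hstep
    (by simp [orbitVertex, hq])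
  simp only [orbitVertex, MulAut.conjNormal_apply, hconj, swap_apply_left] at this
  exact ha ((hq a).mpr this.symm)

variable (hXX : X⁻¹ = X)
include hXX

theorem swap_mem_of_apply_eq_self_iff {p q : α} (hpq : p ≠ q) (hfix : X p = p ↔ X q = q) :
    swap p q ∈ reachableSubgroup MulAut.conjNormal (⟨X, hX⟩ : alternatingGroup α) := by
  refine mem_reachableSubgroup_conjNormal hX
    (commute_conj_of_commute_conj hXX (swap_inv p q) ?_)
  rw [← swap_apply_apply]
  by_cases hp : X p = p
  · rw [hp, hfix.mp hp]
    exact Commute.refl _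
  have hq : X q ≠ q := mt hfix.mpr hp
  by_cases hpq' : X p = q
  · have hqp : X q = p := by rw [← hpq', apply_apply_of_inv_eq hXX]
    rw [hpq', hqp, swap_comm]
    exact Commute.refl _
  have hqp : X q ≠ p := fun h => hpq' (by rw [← h, apply_apply_of_inv_eq hXX])
  exact (disjoint_swap_swap (by simp [hp, hq, hpq, hpq', hqp, X.injective.ne hpq])).commute

theorem swap_mem_of_apply_ne_of_apply_eq {p q g a : α} (hp : X p ≠ p) (hq : X q = q)
    (hg : X g = g) (hgq : g ≠ q) (ha : X a ≠ a) (hap : a ≠ p) (hap' : a ≠ X p) :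
    swap p q ∈ reachableSubgroup MulAut.conjNormal (⟨X, hX⟩ : alternatingGroup α) := by
  have hXp' : X (X p) = p := apply_apply_of_inv_eq hXX p
  obtain ⟨p', hp'⟩ : ∃ p', X p = p' := ⟨_, rfl⟩
  rw [hp'] at hap' hXp'
  have hp'p : p' ≠ p := hp' ▸ hp
  have hpq : p ≠ q := fun h => hp (h ▸ hq)
  have hgp : g ≠ p := fun h => hp (h ▸ hg)
  have haq : a ≠ q := fun h => ha (h ▸ hq)
  have hag : a ≠ g := fun h => ha (h ▸ hg)
  have hp'q : p' ≠ q := fun h => hpq (by rw [← hXp', h, hq])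
  have hp'g : p' ≠ g := fun h => hgp (by rw [← hg, ← h, hXp'])
  have hσ : swap p q * swap p' g ∈ reachableSubgroup MulAut.conjNormal ⟨X, hX⟩ := by
    have hcomm : Commute (swap p q) (swap p' g) := (disjoint_swap_swap
      (by simp [*, Ne.symm hp'p, Ne.symm hp'q, Ne.symm hgp, Ne.symm hgq])).commute
    refine mem_reachableSubgroup_conjNormal hX (commute_conj_of_commute_conj hXX ?_ ?_)
    · rw [mul_inv_rev, swap_inv, swap_inv, hcomm.eq]
    · rw [← conj_mul, ← swap_apply_apply, ← swap_apply_apply, hq, hg, hp', hXp']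
      exact commute_swap_mul_swap (by simp [*, Ne.symm hpq, Ne.symm hgp, Ne.symm hgq])
  have hga : swap g a ∈ reachableSubgroup MulAut.conjNormal ⟨X, hX⟩ := by
    have hfix : X p' = p' ↔ X a = a := by simp [hXp', hp'p.symm, ha]
    have := swap_apply_mem hσ (swap_mem_of_apply_eq_self_iff hX hXX (Ne.symm hap') hfix)
    rwa [mul_apply, mul_apply, swap_apply_left, swap_apply_of_ne_of_ne hgp hgq,
      swap_apply_of_ne_of_ne hap' hag, swap_apply_of_ne_of_ne hap haq] at this
  have hκ := (reachableSubgroup _ _).mul_mem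
    (swap_mem_of_apply_eq_self_iff hX hXX hap (by simp [ha, hp]))
    (swap_mem_of_apply_eq_self_iff hX hXX hgq (by simp [hg, hq]))
  have := swap_apply_mem hκ hga
  rwa [mul_apply, mul_apply, swap_apply_left g q, swap_apply_of_ne_of_ne haq.symm hpq.symm,
    swap_apply_of_ne_of_ne hag haq, swap_apply_left, swap_comm] at this

theorem reachableSubgroup_conjNormal_eq_top (hfix : #{a | X a = a} ≠ 1) :
    reachableSubgroup MulAut.conjNormal (⟨X, hX⟩ : alternatingGroup α) = ⊤ := by
  have hmixed : ∀ p q, X p ≠ p → X q = q →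
      swap p q ∈ reachableSubgroup MulAut.conjNormal ⟨X, hX⟩ := by
    intro p q hp hq
    obtain ⟨g, hg, hgq⟩ : ∃ g ∈ ({a | X a = a} : Finset α), g ≠ q := by
      refine Finset.exists_mem_ne (lt_of_le_of_ne ?_ (Ne.symm hfix)) q
      exact Finset.card_pos.mpr ⟨q, by simpa using hq⟩
    have hsupport : #{p, X p} < #X.support := by
      have h4 := four_dvd_card_support (by rw [sq]; exact inv_eq_iff_mul_eq_one.mp hXX) hX
      have hpos : 0 < #X.support := Finset.card_pos.mpr ⟨p, mem_support.mpr hp⟩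
      have := Finset.card_le_two (a := p) (b := X p)
      omega
    obtain ⟨a, ha, hap⟩ := Finset.exists_mem_notMem_of_card_lt_card hsupport
    simp only [Finset.mem_insert, Finset.mem_singleton, not_or] at hap
    exact swap_mem_of_apply_ne_of_apply_eq hX hXX hp hq (by simpa using hg) hgq
      (mem_support.mp ha) hap.1 hap.2
  rw [eq_top_iff, ← closure_isSwap, Subgroup.closure_le]
  rintro _ ⟨p, q, hpq, rfl⟩
  by_cases hpq' : X p = p ↔ X q = q
  · exact swap_mem_of_apply_eq_self_iff hX hXX hpq hpq'
  by_cases hp : X p = p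
  · rw [swap_comm]
    exact hmixed q p (fun hq => hpq' (iff_of_true hp hq)) hp
  · exact hmixed p q hp (by_contra fun hq => hpq' (iff_of_false hp hq))

end Alternating

theorem statement14_general (n : ℕ)
    (x : alternatingGroup (Fin n)) (hx : orderOf x = 2) (s : ℕ)
    (hs : s = (Finset.univ.filter fun a : Fin n =>
      (x : Equiv.Perm (Fin n)) a = a).card) :
    ¬ (commGraph {h : alternatingGroup (Fin n) | IsConj x h}).Connected ↔
      (n % 4 = 1 ∧ s = 1) := by
  obtain ⟨hx2, hx1⟩ := orderOf_eq_prime_iff.mp ((Subgroup.orderOf_coe x).trans hx)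
  have hxx : (x : Perm (Fin n))⁻¹ = x := inv_eq_of_mul_eq_one_right (by rwa [sq] at hx2)
  obtain ⟨p, hp⟩ : ∃ p, (x : Perm (Fin n)) p ≠ p := not_forall.mp fun h => hx1 (Perm.ext h)
  rw [setOf_isConj_eq_range_conjNormal (sign_swap hp.symm) (commute_swap_apply hxx p).symm]
  constructor
  · intro hdisconnected
    have hs1 : s = 1 := by
      by_contra hs1
      exact hdisconnected (connected_of_reachableSubgroup_eq_top
        (reachableSubgroup_conjNormal_eq_top x.2 hxx (hs ▸ hs1)))
    have h4 := four_dvd_card_support hx2 x.2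
    have hcard := card_fixed_add_card_support (x : Perm (Fin n))
    rw [Fintype.card_fin, ← hs] at hcard
    omega
  · rintro ⟨-, hs1⟩
    obtain ⟨q, hq⟩ := Finset.card_eq_one.mp (hs ▸ hs1)
    exact not_connected_of_apply_eq_self_iff x.2 hx1 fun a => by
      simpa using Finset.ext_iff.mp hq a

/-- For `n ≥ 2` and an involution `x` in the alternating group `Aₙ` with
conjugacy class `𝒞` and `s` fixed points, the commuting graph on `𝒞` is
disconnected iff `n ≡ 1 (mod 4)` and `s = 1`. -/
theorem statement14 (n : ℕ) (hn : 2 ≤ n)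
    (x : alternatingGroup (Fin n)) (hx : orderOf x = 2) (s : ℕ)
    (hs : s = (Finset.univ.filter fun a : Fin n =>
      (x : Equiv.Perm (Fin n)) a = a).card) :
    ¬ (commGraph {h : alternatingGroup (Fin n) | IsConj x h}).Connected ↔
      (n % 4 = 1 ∧ s = 1) :=
  statement14_general n x hx s hs
end

section
/- Let n be an odd positive integer and let G be the dihedral group of order 2n. Let 𝒞 ⊆ G \ {1} be a subset that is closed under conjugation and generates G. Then the matrix K : 𝒞 × 𝒞 → ℚ defined by K(a,b) = |C_G(ab) ∩ 𝒞| is invertible (its determinant is nonzero); that is, the Killing form K_𝒞 is non-degenerate. In particular, the dihedral group of order 2n with n odd is strongly non-degenerate. -/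
open Finset

theorem ZMod.eq_neg_self_iff_of_odd {n : ℕ} (hn : Odd n) {a : ZMod n} : a = -a ↔ a = 0 := by
  rw [eq_neg_iff_add_eq_zero, add_self_eq_zero_iff_eq_zero hn]

theorem ZMod.exists_sub_two_mul_eq_of_odd {n : ℕ} (hn : Odd n) (i j : ZMod n) :
    ∃ k, j - 2 * k = i := by
  have h2 : IsUnit (2 : ZMod n) := by
    simpa using (ZMod.unitOfCoprime 2 (Nat.coprime_two_left.mpr hn)).isUnit
  refine ⟨h2.unit⁻¹ * (j - i), ?_⟩
  rw [← mul_assoc, h2.mul_val_inv, one_mul, sub_sub_cancel]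

theorem Set.ncard_sep_eq_card_filter {α : Type*} (C : Set α) [Fintype C] (P : α → Prop)
    [DecidablePred P] : {c ∈ C | P c}.ncard = #{i : C | P i} := by
  rw [← Set.ncard_coe_finset, ← Set.ncard_image_of_injective _ Subtype.val_injective]
  congr
  ext c
  simp [and_comm]

section
variable {ι 𝕜 : Type*} [Fintype ι] [Field 𝕜] (P : ι → Prop) [DecidablePred P]

lemma Finset.sum_ite_iff_mul (a : ι) (p : 𝕜) (v : ι → 𝕜) :
    ∑ b, (if (P a ↔ P b) then p else 1) * v b =
      if P a then p * ∑ b with P b, v b + ∑ b with ¬P b, v b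
      else ∑ b with P b, v b + p * ∑ b with ¬P b, v b := by
  rw [← sum_filter_add_sum_filter_not univ P, mul_sum, mul_sum]
  split_ifs with ha <;> congr 1 <;> refine sum_congr rfl fun b hb => ?_ <;>
    simp_all

variable [DecidableEq ι] [LinearOrder 𝕜] [IsStrictOrderedRing 𝕜]

theorem Matrix.det_perm_add_blockConst_ne_zero {σ : ι → ι} (hσ : Function.Involutive σ)
    (hPσ : ∀ i, P (σ i) ↔ P i) (hP : ∃ i, ¬P i) :
    (Matrix.of fun a b : ι => ((if b = σ a then (#{i | ¬P i} : 𝕜) else 0) +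
      if (P a ↔ P b) then (#{i | P i} : 𝕜) else 1)).det ≠ 0 := by
  set p : 𝕜 := (#{i | P i} : 𝕜)
  set q : 𝕜 := (#{i | ¬P i} : 𝕜)
  have hp : 0 ≤ p := Nat.cast_nonneg _
  have hq : 1 ≤ q := by
    obtain ⟨i, hi⟩ := hP
    exact Nat.one_le_cast.mpr (card_pos.mpr ⟨i, by simpa using hi⟩)
  have hq0 : q ≠ 0 := (zero_lt_one.trans_le hq).ne'
  rw [Ne, ← Matrix.exists_mulVec_eq_zero_iff]
  rintro ⟨v, hv0, hv⟩
  set A := ∑ b with P b, v b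
  set B := ∑ b with ¬P b, v b
  -- row `σ b` of `K v = 0`: only the entry at `b` sees the permutation part
  have hrow : ∀ b, q * v b = -(if P b then p * A + B else A + p * B) := by
    intro b
    have := congrFun hv (σ b)
    simp only [Matrix.mulVec, dotProduct, Matrix.of_apply, add_mul, sum_add_distrib,
      sum_ite_iff_mul, hPσ, Pi.zero_apply] at this
    simp only [ite_mul, zero_mul, sum_ite_eq', mem_univ, if_true, hσ b] at this
    linear_combination this
  have hA : q * A = -p * (p * A + B) := by
    rw [mul_sum, sum_congr rfl fun b hb => by rw [hrow, if_pos (mem_filter.mp hb).2],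
      sum_const, nsmul_eq_mul]
    ring
  have hB : q * B = q * -(A + p * B) := by
    rw [mul_sum, sum_congr rfl fun b hb => by rw [hrow, if_neg (mem_filter.mp hb).2],
      sum_const, nsmul_eq_mul]
  have hB' : B + A + p * B = 0 := mul_left_cancel₀ hq0 (by linear_combination hB)
  have hB0 : B = 0 := by
    have key : ((q + p ^ 2) * (1 + p) - p) * B = 0 := by
      linear_combination -hA + (q + p ^ 2) * hB'
    refine (mul_eq_zero.mp key).resolve_left ?_
    nlinarith
  have hA0 : A = 0 := by linear_combination hB' - (1 + p) * hB0
  refine hv0 (funext fun b => (mul_eq_zero.mp ?_).resolve_left hq0)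
  rw [hrow, hA0, hB0]
  split_ifs <;> ring
end

namespace DihedralGroup

variable {n : ℕ}

def IsRotation : DihedralGroup n → Prop
  | r _ => True
  | sr _ => False

instance : DecidablePred (IsRotation (n := n))
  | r _ => isTrue trivial
  | sr _ => isFalse id

@[simp] lemma isRotation_r (i : ZMod n) : IsRotation (r i) := trivial

@[simp] lemma not_isRotation_sr (i : ZMod n) : ¬IsRotation (sr i) := id

lemma isRotation_mul_iff :
    ∀ a b : DihedralGroup n, IsRotation (a * b) ↔ (IsRotation a ↔ IsRotation b)
  | r _, r _ | r _, sr _ | sr _, r _ | sr _, sr _ => by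
    simp [r_mul_r, r_mul_sr, sr_mul_r, sr_mul_sr]

lemma isRotation_inv_iff : ∀ a : DihedralGroup n, IsRotation a⁻¹ ↔ IsRotation a
  | r _ | sr _ => by simp [inv_r, inv_sr]

lemma exists_sr_mem_of_closure_eq_top {C : Set (DihedralGroup n)}
    (hC : Subgroup.closure C = ⊤) : ∃ i, sr i ∈ C := by
  by_contra! h
  suffices ∀ g ∈ Subgroup.closure C, IsRotation g from
    not_isRotation_sr 0 (this _ (hC ▸ Subgroup.mem_top _))
  intro g hg
  induction hg using Subgroup.closure_induction with
  | mem g hg => cases g with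
    | r => trivial
    | sr i => exact h i hg
  | one => trivial
  | mul a b _ _ ha hb => exact (isRotation_mul_iff a b).mpr (iff_of_true ha hb)
  | inv a _ ha => exact (isRotation_inv_iff a).mpr ha

lemma r_mul_sr_mul_inv (i j : ZMod n) : r i * sr j * (r i)⁻¹ = sr (j - 2 * i) := by
  rw [inv_r, r_mul_sr, sr_mul_r]
  congr 1
  ring

lemma sr_mul_r_mul_inv (i j : ZMod n) : sr j * r i * (sr j)⁻¹ = r (-i) := by
  rw [inv_sr, sr_mul_r, sr_mul_sr]
  congr 1
  ring

lemma isConj_sr (hn : Odd n) (i j : ZMod n) : IsConj (sr i) (sr j) := by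
  obtain ⟨k, hk⟩ := ZMod.exists_sub_two_mul_eq_of_odd hn j i
  exact isConj_iff.mpr ⟨r k, by rw [r_mul_sr_mul_inv, hk]⟩

lemma commute_r_iff (hn : Odd n) {k : ZMod n} (hk : k ≠ 0) :
    ∀ g : DihedralGroup n, Commute g (r k) ↔ IsRotation g
  | r i => by simp [commute_iff_eq, r_mul_r, add_comm]
  | sr i => by
    simp [commute_iff_eq, r_mul_sr, sr_mul_r, sub_eq_add_neg, ZMod.eq_neg_self_iff_of_odd hn, hk]

lemma commute_sr_iff (hn : Odd n) (k : ZMod n) :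
    ∀ g : DihedralGroup n, Commute g (sr k) ↔ g = 1 ∨ g = sr k
  | r i => by
    simp [commute_iff_eq, r_mul_sr, sr_mul_r, ← r_zero, sub_eq_add_neg, eq_comm (a := -i),
      ZMod.eq_neg_self_iff_of_odd hn]
  | sr i => by
    simp only [commute_iff_eq, sr_mul_sr, ← r_zero, r.injEq, reduceCtorEq, false_or, sr.injEq]
    rw [← neg_sub i k, eq_comm, ZMod.eq_neg_self_iff_of_odd hn, sub_eq_zero]

section ConjugationClosed

variable {C : Set (DihedralGroup n)}

lemma sr_mem_of_conj_mem (hn : Odd n) (hconj : ∀ g : DihedralGroup n, ∀ c ∈ C, g * c * g⁻¹ ∈ C)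
    (hgen : Subgroup.closure C = ⊤) (k : ZMod n) : sr k ∈ C := by
  obtain ⟨i, hi⟩ := exists_sr_mem_of_closure_eq_top hgen
  obtain ⟨g, hg⟩ := isConj_iff.mp (isConj_sr hn i k)
  exact hg ▸ hconj g _ hi

lemma inv_mem_of_conj_mem (hconj : ∀ g : DihedralGroup n, ∀ c ∈ C, g * c * g⁻¹ ∈ C) :
    ∀ a ∈ C, a⁻¹ ∈ C
  | r i, ha => by simpa only [inv_r, sr_mul_r_mul_inv] using hconj (sr 0) _ ha
  | sr i, ha => by rwa [inv_sr]

lemma ncard_sep_not_isRotation (hS : ∀ k, sr k ∈ C) :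
    {c ∈ C | ¬IsRotation c}.ncard = n := by
  have : {c ∈ C | ¬IsRotation c} = Set.range sr := by
    ext (i | i) <;> simp [hS]
  rw [this, Set.ncard_range_of_injective fun _ _ => sr.inj, Nat.card_zmod]

lemma ncard_sep_commute (hn : Odd n) [Finite C] (h1 : 1 ∉ C) (hS : ∀ k, sr k ∈ C)
    (g : DihedralGroup n) : {c ∈ C | Commute c g}.ncard =
      (if g = 1 then n else 0) + if IsRotation g then {c ∈ C | IsRotation c}.ncard else 1 := by
  rcases g with k | k
  · by_cases hk : k = 0
    · subst hk
      have hC : {c ∈ C | Commute c (r 0)} = C := by simp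
      have hsplit : {c ∈ C | IsRotation c}.ncard + {c ∈ C | ¬IsRotation c}.ncard = C.ncard :=
        Set.ncard_inter_add_ncard_sdiff_eq_ncard C {c | IsRotation c}
      rw [hC, if_pos r_zero, if_pos (isRotation_r 0), ← hsplit, ncard_sep_not_isRotation hS,
        add_comm]
    · simp only [commute_r_iff hn hk, isRotation_r, if_true, ← r_zero, r.injEq, hk, if_false,
        zero_add]
  · have : {c ∈ C | Commute c (sr k)} = {sr k} := by
      ext c
      simp only [commute_sr_iff hn, Set.mem_ofPred_eq, Set.mem_singleton_iff]
      constructor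
      · rintro ⟨hc, rfl | rfl⟩
        · exact absurd hc h1
        · rfl
      · rintro rfl
        exact ⟨hS k, Or.inr rfl⟩
    simp [this, ← r_zero]

lemma killingMatrix_eq (hn : Odd n) [Fintype C] [DecidableEq C] (h1 : 1 ∉ C)
    (hS : ∀ k, sr k ∈ C) (hinv : ∀ a ∈ C, a⁻¹ ∈ C) :
    killingMatrix C = Matrix.of fun a b : C =>
      ((if b = ⟨a⁻¹, hinv a a.2⟩ then (#{i : C | ¬IsRotation i.1} : ℚ) else 0) +
        if (IsRotation a.1 ↔ IsRotation b.1) then (#{i : C | IsRotation i.1} : ℚ) else 1) := by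
  ext a b
  rw [killingMatrix, Matrix.of_apply, Matrix.of_apply, ncard_sep_commute hn h1 hS,
    ← Set.ncard_sep_eq_card_filter, ← Set.ncard_sep_eq_card_filter C (¬IsRotation ·),
    ncard_sep_not_isRotation hS]
  simp [Subtype.ext_iff, mul_eq_one_iff_eq_inv', isRotation_mul_iff]

end ConjugationClosed

end DihedralGroup

/-- Dihedral groups of order `2n`, `n` odd, are strongly non-degenerate: for any
conjugation-stable generating subset `𝒞` not containing `1`, the matrix of the
Killing form over `ℚ` has nonzero determinant. -/
theorem statement19 (n : ℕ) (hodd : Odd n) (𝒞 : Set (DihedralGroup n))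
    [Fintype 𝒞] [DecidableEq 𝒞]
    (h1 : (1 : DihedralGroup n) ∉ 𝒞)
    (hconj : ∀ g : DihedralGroup n, ∀ c ∈ 𝒞, g * c * g⁻¹ ∈ 𝒞)
    (hgen : Subgroup.closure 𝒞 = ⊤) :
    (killingMatrix 𝒞).det ≠ 0 := by
  have hS := DihedralGroup.sr_mem_of_conj_mem hodd hconj hgen
  have hinv := DihedralGroup.inv_mem_of_conj_mem hconj
  rw [DihedralGroup.killingMatrix_eq hodd h1 hS hinv]
  exact Matrix.det_perm_add_blockConst_ne_zero _ (fun a => Subtype.ext (inv_inv _))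
    (fun a => DihedralGroup.isRotation_inv_iff _)
    ⟨⟨.sr 0, hS 0⟩, DihedralGroup.not_isRotation_sr 0⟩
end
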